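/- arXiv:1603.02731 — 7 statements merged into one kernel-verified Lean document; each statement's English description precedes it below -/
import Mathlib

section
/- Let R be a ring and M an R-module. Any two complete resolutions of M are homotopy equivalent; that is, if C and C' are both complete resolutions of M, then there exist chain maps γ : C → C' and δ : C' → C such that γ∘δ is homotopic to the identity of C' and δ∘γ is homotopic to the identity of C. -/
/-!
Statement 0: Any two complete resolutions of a module `M` over a ring `R` are
homotopy equivalent.

We encode a (ℤ-indexed) chain complex of `R`-modules as a family `X : ℤ → Type`
of `R`-modules together with differentials `d n : X (n+1) →ₗ[R] X n` squaring
to zero.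
-/

universe u v

/-- A ℤ-indexed chain complex of left `R`-modules. -/
structure ZComplex (R : Type u) [Ring R] where
  X : ℤ → Type v
  [acg : ∀ n, AddCommGroup (X n)]
  [mod : ∀ n, Module R (X n)]
  d : ∀ n : ℤ, X (n + 1) →ₗ[R] X n
  dd : ∀ (n : ℤ) (x : X (n + 1 + 1)), d n (d (n + 1) x) = 0

attribute [instance] ZComplex.acg ZComplex.mod

variable {R : Type u} [Ring R]

/-- `C` is totally acyclic: all modules are finitely generated free, `C` is exact,
and the dual complex `Hom_R(C, R)` is exact. -/
def ZComplex.IsTotallyAcyclic (C : ZComplex R) : Prop :=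
  (∀ n, Module.Free R (C.X n)) ∧ (∀ n, Module.Finite R (C.X n)) ∧
  (∀ n : ℤ, LinearMap.ker (C.d n) = LinearMap.range (C.d (n + 1))) ∧
  (∀ (n : ℤ) (g : C.X (n + 1) →ₗ[R] R), (∀ x, g (C.d (n + 1) x) = 0) →
    ∃ h : C.X n →ₗ[R] R, ∀ x, g x = h (C.d n x))

/-- `P` is a projective resolution of `M`: it vanishes in negative degrees, consists of
projective modules, is exact in positive degrees, and has an augmentation `P₀ → M`
identifying `M` with the cokernel of `P₁ → P₀`. -/
def ZComplex.IsProjectiveResolution (P : ZComplex R) (M : Type v) [AddCommGroup M]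
    [Module R M] : Prop :=
  (∀ n : ℤ, n < 0 → Subsingleton (P.X n)) ∧
  (∀ n, Module.Projective R (P.X n)) ∧
  (∀ n : ℤ, 0 ≤ n → LinearMap.ker (P.d n) = LinearMap.range (P.d (n + 1))) ∧
  ∃ ε : P.X 0 →ₗ[R] M, Function.Surjective ε ∧ LinearMap.ker ε = LinearMap.range (P.d 0)

/-- The family of maps `φ n : C n → C n` (for degrees `> i`) is homotopic to the identity
in the truncated complex `C_{> i}` (in which degree `i` has been replaced by `0`, so the
homotopy relation at the bottom degree `i+1` has no `λ ∘ d` term). -/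
def ZComplex.HomotopicToIdAbove (C : ZComplex R) (φ : ∀ n, C.X n →ₗ[R] C.X n) (i : ℤ) :
    Prop :=
  ∃ lam : ∀ n, C.X n →ₗ[R] C.X (n + 1),
    (∀ n : ℤ, i < n → ∀ x : C.X (n + 1),
      φ (n + 1) x - x = C.d (n + 1) (lam (n + 1) x) + lam n (C.d n x)) ∧
    (∀ x : C.X (i + 1), φ (i + 1) x - x = C.d (i + 1) (lam (i + 1) x))

/-- The hard truncations `C_{> i}` and `D_{> i}` are homotopy equivalent. -/
def ZComplex.HomotopyEquivAbove (C D : ZComplex R) (i : ℤ) : Prop :=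
  ∃ (ψ : ∀ n, C.X n →ₗ[R] D.X n) (ζ : ∀ n, D.X n →ₗ[R] C.X n),
    (∀ n : ℤ, i < n → ∀ x : C.X (n + 1), ψ n (C.d n x) = D.d n (ψ (n + 1) x)) ∧
    (∀ n : ℤ, i < n → ∀ x : D.X (n + 1), ζ n (D.d n x) = C.d n (ζ (n + 1) x)) ∧
    C.HomotopicToIdAbove (fun n => (ζ n).comp (ψ n)) i ∧
    D.HomotopicToIdAbove (fun n => (ψ n).comp (ζ n)) i

/-- `C` is a complete resolution of `M`: `C` is totally acyclic and some hard truncation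
`C_{> i}` is homotopy equivalent to the corresponding truncation `P_{> i}` of some
projective resolution `P` of `M`. -/
def ZComplex.IsCompleteResolution (C : ZComplex R) (M : Type v) [AddCommGroup M]
    [Module R M] : Prop :=
  C.IsTotallyAcyclic ∧
  ∃ P : ZComplex.{u, v} R, P.IsProjectiveResolution M ∧ ∃ i : ℤ, C.HomotopyEquivAbove P i


/-- Dual exactness of `C` with values in `R` extends to any finite free target. -/
lemma ZComplex.factor {C : ZComplex R}
    (hdual : ∀ (n : ℤ) (g : C.X (n + 1) →ₗ[R] R), (∀ x, g (C.d (n + 1) x) = 0) →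
      ∃ h : C.X n →ₗ[R] R, ∀ x, g x = h (C.d n x))
    {F : Type v} [AddCommGroup F] [Module R F] [Module.Free R F] [Module.Finite R F]
    (n : ℤ) (g : C.X (n + 1) →ₗ[R] F) (hg : ∀ x, g (C.d (n + 1) x) = 0) :
    ∃ h : C.X n →ₗ[R] F, ∀ x, g x = h (C.d n x) := by
  classical
  let b := Module.Free.chooseBasis R F
  have key : ∀ j, ∃ h : C.X n →ₗ[R] R, ∀ x, b.coord j (g x) = h (C.d n x) := by
    intro j
    refine hdual n ((b.coord j).comp g) ?_
    intro x; simp [hg x]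
  choose hf hspec using key
  refine ⟨∑ j, (LinearMap.toSpanSingleton R F (b j)).comp (hf j), fun x => ?_⟩
  rw [LinearMap.sum_apply]
  simp only [LinearMap.comp_apply, LinearMap.toSpanSingleton_apply]
  conv_lhs => rw [← b.sum_repr (g x)]
  refine Finset.sum_congr rfl fun j _ => ?_
  rw [← hspec j x, Module.Basis.coord_apply]

open Classical in
/-- Auxiliary sequence extending a chain map downwards, one degree at a time. -/
noncomputable def ZComplex.extAux (C D : ZComplex R) (j : ℤ)
    (f : ∀ n, C.X n →ₗ[R] D.X n) : ℕ → ∀ n, C.X n →ₗ[R] D.X n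
  | 0 => f
  | (k+1) =>
      Function.update (ZComplex.extAux C D j f k) (j - k)
        (if h : ∃ h' : C.X (j - k) →ₗ[R] D.X (j - k),
            ∀ x, h' (C.d (j - k) x) = D.d (j - k) (ZComplex.extAux C D j f k (j - k + 1) x)
          then h.choose else 0)

lemma ZComplex.extAux_stable (C D : ZComplex R) (j : ℤ)
    (f : ∀ n, C.X n →ₗ[R] D.X n) {k K : ℕ} (hkK : k ≤ K)
    {n : ℤ} (hn : j - k < n) : ZComplex.extAux C D j f K n = ZComplex.extAux C D j f k n := by
  induction K with
  | zero => cases Nat.le_zero.mp hkK; rfl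
  | succ K ih =>
    rcases Nat.lt_or_ge k (K+1) with h | h
    · have hK : k ≤ K := Nat.lt_succ_iff.mp h
      rw [ZComplex.extAux, Function.update_of_ne (by omega), ih hK]
    · cases le_antisymm hkK h; rfl

lemma ZComplex.extAux_comm (C D : ZComplex R)
    (hdual : ∀ (n : ℤ) (g : C.X (n + 1) →ₗ[R] R), (∀ x, g (C.d (n + 1) x) = 0) →
      ∃ h : C.X n →ₗ[R] R, ∀ x, g x = h (C.d n x))
    (hfree : ∀ n, Module.Free R (D.X n)) (hfin : ∀ n, Module.Finite R (D.X n))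
    (j : ℤ) (f : ∀ n, C.X n →ₗ[R] D.X n)
    (hf : ∀ n, j < n → ∀ x, f n (C.d n x) = D.d n (f (n+1) x)) :
    ∀ (k : ℕ) (n : ℤ), j - k < n → ∀ x,
      ZComplex.extAux C D j f k n (C.d n x) = D.d n (ZComplex.extAux C D j f k (n+1) x) := by
  intro k
  induction k with
  | zero => intro n hn x; exact hf n (by omega) x
  | succ k ih =>
    intro n hn x
    rcases eq_or_lt_of_le (show j - (k:ℤ) ≤ n by omega) with he | hlt
    · -- n = j - k : the freshly constructed map
      have hex : ∃ h' : C.X (j - k) →ₗ[R] D.X (j - k),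
          ∀ x, h' (C.d (j - k) x) = D.d (j - k) (ZComplex.extAux C D j f k (j - k + 1) x) := by
        haveI := hfree (j - (k:ℤ)); haveI := hfin (j - (k:ℤ))
        have hker : ∀ x, ((D.d (j - k)).comp (ZComplex.extAux C D j f k (j - k + 1)))
            (C.d (j - k + 1) x) = 0 := by
          intro x
          simp only [LinearMap.comp_apply]
          rw [ih (j - k + 1) (by omega) x]
          exact D.dd (j - k) _
        obtain ⟨h, hh⟩ := ZComplex.factor hdual (n := j - k)
          ((D.d (j - k)).comp (ZComplex.extAux C D j f k (j - k + 1))) hker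
        exact ⟨h, fun x => (hh x).symm⟩
      subst he
      rw [ZComplex.extAux]
      rw [Function.update_of_ne (by omega : (j - (k:ℤ)) + 1 ≠ j - k)]
      rw [Function.update_self]
      rw [dif_pos hex]
      exact hex.choose_spec x
    · -- untouched degrees
      rw [ZComplex.extAux, Function.update_of_ne (by omega), Function.update_of_ne (by omega)]
      exact ih n hlt x

/-- Extension of chain maps downwards: a family commuting with `d` above degree `j`
can be replaced below `j` to commute everywhere. -/
lemma ZComplex.extend_chain (C D : ZComplex R)
    (hdual : ∀ (n : ℤ) (g : C.X (n + 1) →ₗ[R] R), (∀ x, g (C.d (n + 1) x) = 0) →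
      ∃ h : C.X n →ₗ[R] R, ∀ x, g x = h (C.d n x))
    (hfree : ∀ n, Module.Free R (D.X n)) (hfin : ∀ n, Module.Finite R (D.X n))
    (j : ℤ) (f : ∀ n, C.X n →ₗ[R] D.X n)
    (hf : ∀ n, j < n → ∀ x, f n (C.d n x) = D.d n (f (n+1) x)) :
    ∃ g : ∀ n, C.X n →ₗ[R] D.X n,
      (∀ (n : ℤ) (x : C.X (n+1)), g n (C.d n x) = D.d n (g (n+1) x)) ∧
      (∀ n, j < n → g n = f n) := by
  refine ⟨fun n => ZComplex.extAux C D j f ((j - n).toNat + 1) n, fun n x => ?_, fun n hn => ?_⟩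
  · show ZComplex.extAux C D j f ((j - n).toNat + 1) n (C.d n x)
        = D.d n (ZComplex.extAux C D j f ((j - (n+1)).toNat + 1) (n+1) x)
    have h1 : ZComplex.extAux C D j f ((j - (n+1)).toNat + 1) (n+1)
        = ZComplex.extAux C D j f ((j - n).toNat + 1) (n+1) :=
      (ZComplex.extAux_stable C D j f (by omega) (by omega)).symm
    rw [h1]
    exact ZComplex.extAux_comm C D hdual hfree hfin j f hf _ n (by omega) x
  · exact ZComplex.extAux_stable C D j f (Nat.zero_le _) (by omega)

open Classical in
/-- Auxiliary sequence extending a homotopy downwards. -/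
noncomputable def ZComplex.homAux (C D : ZComplex R) (j : ℤ)
    (g : ∀ n, C.X n →ₗ[R] D.X n) (lam : ∀ n, C.X n →ₗ[R] D.X (n+1)) :
    ℕ → ∀ n, C.X n →ₗ[R] D.X (n+1)
  | 0 => lam
  | (k+1) =>
      Function.update (ZComplex.homAux C D j g lam k) (j - k)
        (if h : ∃ l : C.X (j - k) →ₗ[R] D.X (j - k + 1),
            ∀ x, l (C.d (j - k) x)
              = g (j - k + 1) x - D.d (j - k + 1) (ZComplex.homAux C D j g lam k (j - k + 1) x)
          then h.choose else 0)

lemma ZComplex.homAux_stable (C D : ZComplex R) (j : ℤ)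
    (g : ∀ n, C.X n →ₗ[R] D.X n) (lam : ∀ n, C.X n →ₗ[R] D.X (n+1)) {k K : ℕ} (hkK : k ≤ K)
    {n : ℤ} (hn : j - k < n) :
    ZComplex.homAux C D j g lam K n = ZComplex.homAux C D j g lam k n := by
  induction K with
  | zero => cases Nat.le_zero.mp hkK; rfl
  | succ K ih =>
    rcases Nat.lt_or_ge k (K+1) with h | h
    · have hK : k ≤ K := Nat.lt_succ_iff.mp h
      rw [ZComplex.homAux, Function.update_of_ne (by omega), ih hK]
    · cases le_antisymm hkK h; rfl

lemma ZComplex.homAux_rel (C D : ZComplex R)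
    (hdual : ∀ (n : ℤ) (g : C.X (n + 1) →ₗ[R] R), (∀ x, g (C.d (n + 1) x) = 0) →
      ∃ h : C.X n →ₗ[R] R, ∀ x, g x = h (C.d n x))
    (hfree : ∀ n, Module.Free R (D.X n)) (hfin : ∀ n, Module.Finite R (D.X n))
    (j : ℤ) (g : ∀ n, C.X n →ₗ[R] D.X n)
    (hg : ∀ (n : ℤ) (x : C.X (n+1)), g n (C.d n x) = D.d n (g (n+1) x))
    (lam : ∀ n, C.X n →ₗ[R] D.X (n+1))
    (hlam : ∀ n, j < n → ∀ x, g (n+1) x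
      = D.d (n+1) (lam (n+1) x) + lam n (C.d n x)) :
    ∀ (k : ℕ) (n : ℤ), j - k < n → ∀ x,
      g (n+1) x = D.d (n+1) (ZComplex.homAux C D j g lam k (n+1) x)
        + ZComplex.homAux C D j g lam k n (C.d n x) := by
  intro k
  induction k with
  | zero => intro n hn x; exact hlam n (by omega) x
  | succ k ih =>
    intro n hn x
    rcases eq_or_lt_of_le (show j - (k:ℤ) ≤ n by omega) with he | hlt
    · -- n = j - k
      have hex : ∃ l : C.X (j - k) →ₗ[R] D.X (j - k + 1),
          ∀ x, l (C.d (j - k) x)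
            = g (j - k + 1) x - D.d (j - k + 1) (ZComplex.homAux C D j g lam k (j - k + 1) x) := by
        haveI := hfree (j - (k:ℤ) + 1); haveI := hfin (j - (k:ℤ) + 1)
        have hker : ∀ x, (g (j - k + 1)
            - (D.d (j - k + 1)).comp (ZComplex.homAux C D j g lam k (j - k + 1)))
            (C.d (j - k + 1) x) = 0 := by
          intro x
          simp only [LinearMap.sub_apply, LinearMap.comp_apply]
          rw [hg (j - k + 1) x, ih (j - k + 1) (by omega) x]
          simp only [map_add]
          rw [D.dd (j - k + 1) _]
          abel
        obtain ⟨l, hl⟩ := ZComplex.factor hdual (n := j - k)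
          (g (j - k + 1) - (D.d (j - k + 1)).comp (ZComplex.homAux C D j g lam k (j - k + 1)))
          hker
        refine ⟨l, fun x => ?_⟩
        have := hl x
        simp only [LinearMap.sub_apply, LinearMap.comp_apply] at this
        rw [← this]
      subst he
      rw [ZComplex.homAux]
      rw [Function.update_of_ne (by omega : (j - (k:ℤ)) + 1 ≠ j - k)]
      rw [Function.update_self, dif_pos hex, hex.choose_spec x]
      abel
    · rw [ZComplex.homAux, Function.update_of_ne (by omega), Function.update_of_ne (by omega)]
      exact ih n hlt x

/-- A homotopy valid above degree `j` (for an everywhere-defined chain map `g`)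
can be modified below `j` so as to be valid everywhere. -/
lemma ZComplex.extend_homotopy (C D : ZComplex R)
    (hdual : ∀ (n : ℤ) (g : C.X (n + 1) →ₗ[R] R), (∀ x, g (C.d (n + 1) x) = 0) →
      ∃ h : C.X n →ₗ[R] R, ∀ x, g x = h (C.d n x))
    (hfree : ∀ n, Module.Free R (D.X n)) (hfin : ∀ n, Module.Finite R (D.X n))
    (j : ℤ) (g : ∀ n, C.X n →ₗ[R] D.X n)
    (hg : ∀ (n : ℤ) (x : C.X (n+1)), g n (C.d n x) = D.d n (g (n+1) x))
    (lam : ∀ n, C.X n →ₗ[R] D.X (n+1))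
    (hlam : ∀ n, j < n → ∀ x, g (n+1) x = D.d (n+1) (lam (n+1) x) + lam n (C.d n x)) :
    ∃ L : ∀ n, C.X n →ₗ[R] D.X (n+1),
      ∀ (n : ℤ) (x : C.X (n+1)), g (n+1) x = D.d (n+1) (L (n+1) x) + L n (C.d n x) := by
  refine ⟨fun n => ZComplex.homAux C D j g lam ((j - n).toNat + 1) n, fun n x => ?_⟩
  show g (n+1) x = D.d (n+1) (ZComplex.homAux C D j g lam ((j - (n+1)).toNat + 1) (n+1) x)
      + ZComplex.homAux C D j g lam ((j - n).toNat + 1) n (C.d n x)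
  have h1 : ZComplex.homAux C D j g lam ((j - (n+1)).toNat + 1) (n+1)
      = ZComplex.homAux C D j g lam ((j - n).toNat + 1) (n+1) :=
    (ZComplex.homAux_stable C D j g lam (by omega) (by omega)).symm
  rw [h1]
  exact ZComplex.homAux_rel C D hdual hfree hfin j g hg lam hlam _ n (by omega) x

open Classical in
/-- Auxiliary sequence building a chain map between projective resolutions upwards. -/
noncomputable def ZComplex.cmpAux (P P' : ZComplex R) {M : Type v} [AddCommGroup M]
    [Module R M] (ε : P.X 0 →ₗ[R] M) (ε' : P'.X 0 →ₗ[R] M) :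
    ℕ → ∀ n : ℤ, P.X n →ₗ[R] P'.X n
  | 0 => Function.update (fun _ => 0) (0 : ℤ)
      (if h : ∃ f : P.X 0 →ₗ[R] P'.X 0, ∀ x, ε' (f x) = ε x then h.choose else 0)
  | (k+1) =>
      Function.update (ZComplex.cmpAux P P' ε ε' k) ((k : ℤ) + 1)
        (if h : ∃ f : P.X ((k:ℤ)+1) →ₗ[R] P'.X ((k:ℤ)+1),
            ∀ x, P'.d k (f x) = ZComplex.cmpAux P P' ε ε' k k (P.d k x)
          then h.choose else 0)

lemma ZComplex.cmpAux_stable (P P' : ZComplex R) {M : Type v} [AddCommGroup M]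
    [Module R M] (ε : P.X 0 →ₗ[R] M) (ε' : P'.X 0 →ₗ[R] M) {k K : ℕ} (hkK : k ≤ K)
    {n : ℤ} (hn : n < (k:ℤ) + 1) :
    ZComplex.cmpAux P P' ε ε' K n = ZComplex.cmpAux P P' ε ε' k n := by
  induction K with
  | zero => cases Nat.le_zero.mp hkK; rfl
  | succ K ih =>
    rcases Nat.lt_or_ge k (K+1) with h | h
    · have hK : k ≤ K := Nat.lt_succ_iff.mp h
      rw [ZComplex.cmpAux, Function.update_of_ne (by omega), ih hK]
    · cases le_antisymm hkK h; rfl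

lemma ZComplex.cmpAux_neg (P P' : ZComplex R) {M : Type v} [AddCommGroup M]
    [Module R M] (ε : P.X 0 →ₗ[R] M) (ε' : P'.X 0 →ₗ[R] M) (K : ℕ)
    {n : ℤ} (hn : n < 0) : ZComplex.cmpAux P P' ε ε' K n = 0 := by
  rw [ZComplex.cmpAux_stable P P' ε ε' (Nat.zero_le K) (by omega)]
  show Function.update (fun _ => 0) (0 : ℤ) _ n = 0
  rw [Function.update_of_ne (by omega)]

lemma ZComplex.cmpAux_spec (P P' : ZComplex R) {M : Type v} [AddCommGroup M] [Module R M]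
    (hP : P.IsProjectiveResolution M) (hP' : P'.IsProjectiveResolution M)
    (ε : P.X 0 →ₗ[R] M) (ε' : P'.X 0 →ₗ[R] M)
    (hεk : ∀ x : P.X (0+1), ε (P.d 0 x) = 0)
    (hε's : Function.Surjective ε') (hε'k : LinearMap.ker ε' = LinearMap.range (P'.d 0)) :
    ∀ k : ℕ, (∀ x, ε' (ZComplex.cmpAux P P' ε ε' k 0 x) = ε x) ∧
      (∀ n : ℤ, 0 ≤ n → n < k → ∀ x,
        ZComplex.cmpAux P P' ε ε' k n (P.d n x) = P'.d n (ZComplex.cmpAux P P' ε ε' k (n+1) x)) := by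
  intro k
  induction k with
  | zero =>
    constructor
    · intro x
      have hex : ∃ f : P.X 0 →ₗ[R] P'.X 0, ∀ x, ε' (f x) = ε x := by
        haveI := hP.2.1 0
        obtain ⟨h, hh⟩ := Module.projective_lifting_property ε' ε hε's
        exact ⟨h, fun x => by rw [← hh]; rfl⟩
      simp only [ZComplex.cmpAux]
      rw [Function.update_self, dif_pos hex]
      exact hex.choose_spec x
    · intro n h0 hk; omega
  | succ k ih =>
    have hex : ∃ f : P.X ((k:ℤ)+1) →ₗ[R] P'.X ((k:ℤ)+1),
        ∀ x, P'.d k (f x) = ZComplex.cmpAux P P' ε ε' k k (P.d k x) := by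
      haveI := hP.2.1 ((k:ℤ)+1)
      have hmem : ∀ x, ZComplex.cmpAux P P' ε ε' k k (P.d k x)
          ∈ LinearMap.range (P'.d k) := by
        intro x
        cases k with
        | zero =>
          show ZComplex.cmpAux P P' ε ε' 0 0 (P.d 0 x) ∈ LinearMap.range (P'.d 0)
          rw [← hε'k, LinearMap.mem_ker, ih.1 (P.d 0 x)]
          exact hεk x
        | succ k' =>
          show ZComplex.cmpAux P P' ε ε' (k'+1) ((k':ℤ)+1) (P.d ((k':ℤ)+1) x)
            ∈ LinearMap.range (P'.d ((k':ℤ)+1))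
          have hexact := hP'.2.2.1 (k' : ℤ) (by omega)
          rw [← hexact, LinearMap.mem_ker,
            ← ih.2 (k':ℤ) (by omega) (by omega) (P.d ((k':ℤ)+1) x),
            P.dd (k':ℤ) x]
          exact map_zero _
      obtain ⟨f, hf⟩ := Module.projective_lifting_property (P'.d (k:ℤ)).rangeRestrict
        (LinearMap.codRestrict _ ((ZComplex.cmpAux P P' ε ε' k (k:ℤ)).comp (P.d (k:ℤ))) hmem)
        (LinearMap.surjective_rangeRestrict _)
      refine ⟨f, fun x => ?_⟩
      have := congrArg (fun (z : P.X ((k:ℤ)+1) →ₗ[R] LinearMap.range (P'.d (k:ℤ))) =>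
        (z x : P'.X (k:ℤ))) hf
      simpa using this
    constructor
    · intro x
      rw [ZComplex.cmpAux, Function.update_of_ne (by omega)]
      exact ih.1 x
    · intro n h0 hk x
      rcases eq_or_lt_of_le (show n ≤ (k:ℤ) by omega) with he | hlt
      · subst he
        rw [ZComplex.cmpAux, Function.update_of_ne (by omega : (k:ℤ) ≠ (k:ℤ) + 1),
          Function.update_self, dif_pos hex]
        exact (hex.choose_spec x).symm
      · rw [ZComplex.cmpAux, Function.update_of_ne (by omega), Function.update_of_ne (by omega)]
        exact ih.2 n h0 hlt x

/-- Comparison theorem: a chain map between two projective resolutions of `M`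
compatible with the augmentations. -/
lemma ZComplex.exists_comparison (P P' : ZComplex R) {M : Type v} [AddCommGroup M]
    [Module R M] (hP : P.IsProjectiveResolution M) (hP' : P'.IsProjectiveResolution M)
    (ε : P.X 0 →ₗ[R] M) (ε' : P'.X 0 →ₗ[R] M)
    (hεk : LinearMap.ker ε = LinearMap.range (P.d 0))
    (hε's : Function.Surjective ε') (hε'k : LinearMap.ker ε' = LinearMap.range (P'.d 0)) :
    ∃ α : ∀ n, P.X n →ₗ[R] P'.X n,
      (∀ (n : ℤ) (x : P.X (n+1)), α n (P.d n x) = P'.d n (α (n+1) x)) ∧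
      (∀ x, ε' (α 0 x) = ε x) := by
  have hεk' : ∀ x : P.X (0+1), ε (P.d 0 x) = 0 := by
    intro x
    have : P.d 0 x ∈ LinearMap.ker ε := by rw [hεk]; exact ⟨x, rfl⟩
    exact this
  have spec := ZComplex.cmpAux_spec P P' hP hP' ε ε' hεk' hε's hε'k
  refine ⟨fun n => ZComplex.cmpAux P P' ε ε' n.toNat n, fun n x => ?_, ?_⟩
  · show ZComplex.cmpAux P P' ε ε' n.toNat n (P.d n x)
        = P'.d n (ZComplex.cmpAux P P' ε ε' (n+1).toNat (n+1) x)
    rcases lt_or_ge n 0 with hn | hn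
    · haveI : Subsingleton (P'.X n) := hP'.1 n hn
      exact Subsingleton.elim _ _
    · have e1 : ZComplex.cmpAux P P' ε ε' n.toNat n
          = ZComplex.cmpAux P P' ε ε' (n.toNat + 1) n :=
        (ZComplex.cmpAux_stable P P' ε ε' (by omega) (by omega)).symm
      have e2 : ZComplex.cmpAux P P' ε ε' (n+1).toNat (n+1)
          = ZComplex.cmpAux P P' ε ε' (n.toNat + 1) (n+1) := by
        rw [show (n+1).toNat = n.toNat + 1 by omega]
      rw [e1, e2]
      exact (spec (n.toNat + 1)).2 n hn (by omega) x
  · intro x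
    show ε' (ZComplex.cmpAux P P' ε ε' (0:ℤ).toNat 0 x) = ε x
    exact (spec 0).1 x

open Classical in
/-- Auxiliary sequence building a null-homotopy on a projective resolution upwards. -/
noncomputable def ZComplex.resHomAux (P : ZComplex R) {M : Type v} [AddCommGroup M]
    [Module R M] (ε : P.X 0 →ₗ[R] M) (g : ∀ n, P.X n →ₗ[R] P.X n) :
    ℕ → ∀ n : ℤ, P.X n →ₗ[R] P.X (n+1)
  | 0 => Function.update (fun _ => 0) (0 : ℤ)
      (if h : ∃ u : P.X 0 →ₗ[R] P.X (0+1), ∀ x, P.d 0 (u x) = g 0 x then h.choose else 0)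
  | (k+1) =>
      Function.update (ZComplex.resHomAux P ε g k) ((k : ℤ) + 1)
        (if h : ∃ u : P.X ((k:ℤ)+1) →ₗ[R] P.X ((k:ℤ)+1+1),
            ∀ x, P.d ((k:ℤ)+1) (u x)
              = g ((k:ℤ)+1) x - ZComplex.resHomAux P ε g k k (P.d k x)
          then h.choose else 0)

lemma ZComplex.resHomAux_stable (P : ZComplex R) {M : Type v} [AddCommGroup M]
    [Module R M] (ε : P.X 0 →ₗ[R] M) (g : ∀ n, P.X n →ₗ[R] P.X n) {k K : ℕ} (hkK : k ≤ K)
    {n : ℤ} (hn : n < (k:ℤ) + 1) :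
    ZComplex.resHomAux P ε g K n = ZComplex.resHomAux P ε g k n := by
  induction K with
  | zero => cases Nat.le_zero.mp hkK; rfl
  | succ K ih =>
    rcases Nat.lt_or_ge k (K+1) with h | h
    · have hK : k ≤ K := Nat.lt_succ_iff.mp h
      rw [ZComplex.resHomAux, Function.update_of_ne (by omega), ih hK]
    · cases le_antisymm hkK h; rfl

lemma ZComplex.resHomAux_neg (P : ZComplex R) {M : Type v} [AddCommGroup M]
    [Module R M] (ε : P.X 0 →ₗ[R] M) (g : ∀ n, P.X n →ₗ[R] P.X n) (K : ℕ)
    {n : ℤ} (hn : n < 0) : ZComplex.resHomAux P ε g K n = 0 := by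
  rw [ZComplex.resHomAux_stable P ε g (Nat.zero_le K) (by omega)]
  show Function.update (fun _ => 0) (0 : ℤ) _ n = 0
  rw [Function.update_of_ne (by omega)]

lemma ZComplex.resHomAux_spec (P : ZComplex R) {M : Type v} [AddCommGroup M] [Module R M]
    (hP : P.IsProjectiveResolution M)
    (ε : P.X 0 →ₗ[R] M) (hεk : LinearMap.ker ε = LinearMap.range (P.d 0))
    (g : ∀ n, P.X n →ₗ[R] P.X n)
    (hg : ∀ (n : ℤ) (x : P.X (n+1)), g n (P.d n x) = P.d n (g (n+1) x))
    (hg0 : ∀ x, ε (g 0 x) = 0) :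
    ∀ k : ℕ, (∀ x, g 0 x = P.d 0 (ZComplex.resHomAux P ε g k 0 x)) ∧
      (∀ n : ℤ, 0 ≤ n → n < k → ∀ x,
        g (n+1) x = P.d (n+1) (ZComplex.resHomAux P ε g k (n+1) x)
          + ZComplex.resHomAux P ε g k n (P.d n x)) := by
  intro k
  induction k with
  | zero =>
    constructor
    · intro x
      have hex : ∃ u : P.X 0 →ₗ[R] P.X (0+1), ∀ x, P.d 0 (u x) = g 0 x := by
        haveI := hP.2.1 (0 : ℤ)
        have hmem : ∀ x, g 0 x ∈ LinearMap.range (P.d 0) := by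
          intro x; rw [← hεk, LinearMap.mem_ker]; exact hg0 x
        obtain ⟨u, hu⟩ := Module.projective_lifting_property (P.d (0:ℤ)).rangeRestrict
          (LinearMap.codRestrict _ (g 0) hmem) (LinearMap.surjective_rangeRestrict _)
        refine ⟨u, fun x => ?_⟩
        have := congrArg (fun (z : P.X 0 →ₗ[R] LinearMap.range (P.d (0:ℤ))) =>
          (z x : P.X (0:ℤ))) hu
        simpa using this
      simp only [ZComplex.resHomAux]
      rw [Function.update_self, dif_pos hex, hex.choose_spec x]
    · intro n h0 hk; omega
  | succ k ih =>
    have hex : ∃ u : P.X ((k:ℤ)+1) →ₗ[R] P.X ((k:ℤ)+1+1),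
        ∀ x, P.d ((k:ℤ)+1) (u x)
          = g ((k:ℤ)+1) x - ZComplex.resHomAux P ε g k k (P.d k x) := by
      haveI := hP.2.1 ((k:ℤ)+1)
      have hmem : ∀ x, g ((k:ℤ)+1) x - ZComplex.resHomAux P ε g k k (P.d k x)
          ∈ LinearMap.range (P.d ((k:ℤ)+1)) := by
        intro x
        have hexact := hP.2.2.1 (k : ℤ) (by omega)
        rw [← hexact, LinearMap.mem_ker, map_sub, ← hg (k:ℤ) x]
        cases k with
        | zero =>
          show g 0 (P.d 0 x) - P.d 0 (ZComplex.resHomAux P ε g 0 0 (P.d 0 x)) = 0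
          rw [← ih.1 (P.d 0 x), sub_self]
        | succ k' =>
          show g ((k':ℤ)+1) (P.d ((k':ℤ)+1) x)
            - P.d ((k':ℤ)+1) (ZComplex.resHomAux P ε g (k'+1) ((k':ℤ)+1)
                (P.d ((k':ℤ)+1) x)) = 0
          rw [ih.2 (k':ℤ) (by omega) (by omega) (P.d ((k':ℤ)+1) x),
            P.dd (k':ℤ) x, map_zero, add_zero, sub_self]
      obtain ⟨u, hu⟩ := Module.projective_lifting_property (P.d ((k:ℤ)+1)).rangeRestrict
        (LinearMap.codRestrict _
          (g ((k:ℤ)+1) - (ZComplex.resHomAux P ε g k (k:ℤ)).comp (P.d (k:ℤ))) hmem)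
        (LinearMap.surjective_rangeRestrict _)
      refine ⟨u, fun x => ?_⟩
      have := congrArg (fun (z : P.X ((k:ℤ)+1) →ₗ[R] LinearMap.range (P.d ((k:ℤ)+1))) =>
        (z x : P.X ((k:ℤ)+1))) hu
      simpa using this
    constructor
    · intro x
      rw [ZComplex.resHomAux, Function.update_of_ne (by omega)]
      exact ih.1 x
    · intro n h0 hk x
      rcases eq_or_lt_of_le (show n ≤ (k:ℤ) by omega) with he | hlt
      · subst he
        rw [ZComplex.resHomAux, Function.update_of_ne (by omega : (k:ℤ) ≠ (k:ℤ) + 1),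
          Function.update_self, dif_pos hex, hex.choose_spec x]
        abel
      · rw [ZComplex.resHomAux, Function.update_of_ne (by omega), Function.update_of_ne (by omega)]
        exact ih.2 n h0 hlt x

/-- A chain self-map of a projective resolution that is compatible with zero on the
augmentation is null-homotopic. -/
lemma ZComplex.exists_nullhomotopy (P : ZComplex R) {M : Type v} [AddCommGroup M]
    [Module R M] (hP : P.IsProjectiveResolution M)
    (ε : P.X 0 →ₗ[R] M) (hεk : LinearMap.ker ε = LinearMap.range (P.d 0))
    (g : ∀ n, P.X n →ₗ[R] P.X n)
    (hg : ∀ (n : ℤ) (x : P.X (n+1)), g n (P.d n x) = P.d n (g (n+1) x))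
    (hg0 : ∀ x, ε (g 0 x) = 0) :
    ∃ u : ∀ n, P.X n →ₗ[R] P.X (n+1),
      ∀ (n : ℤ) (x : P.X (n+1)), g (n+1) x = P.d (n+1) (u (n+1) x) + u n (P.d n x) := by
  have spec := ZComplex.resHomAux_spec P hP ε hεk g hg hg0
  refine ⟨fun n => ZComplex.resHomAux P ε g (n.toNat + 1) n, fun n x => ?_⟩
  show g (n+1) x = P.d (n+1) (ZComplex.resHomAux P ε g ((n+1).toNat + 1) (n+1) x)
      + ZComplex.resHomAux P ε g (n.toNat + 1) n (P.d n x)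
  rcases lt_or_ge n (-1) with hn | hn
  · haveI : Subsingleton (P.X (n+1)) := hP.1 (n+1) (by omega)
    exact Subsingleton.elim _ _
  rcases eq_or_lt_of_le hn with he | hn0
  · -- n = -1
    cases he
    rw [ZComplex.resHomAux_neg P ε g ((-1:ℤ).toNat + 1) (by omega : (-1:ℤ) < 0),
      LinearMap.zero_apply, add_zero]
    exact (spec 1).1 x
  · -- n ≥ 0
    have h2 : ZComplex.resHomAux P ε g ((n+1).toNat + 1) (n+1)
        = ZComplex.resHomAux P ε g (n.toNat + 2) (n+1) := by
      rw [show (n+1).toNat + 1 = n.toNat + 2 by omega]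
    have h3 : ZComplex.resHomAux P ε g (n.toNat + 1) n
        = ZComplex.resHomAux P ε g (n.toNat + 2) n :=
      (ZComplex.resHomAux_stable P ε g (by omega) (by omega)).symm
    rw [h2, h3]
    exact (spec (n.toNat + 2)).2 n hn0 (by omega) x

/-- The composite of two truncated homotopy equivalences through a comparison of
projective resolutions is homotopic to the identity in high degrees. -/
lemma ZComplex.composite_homotopy
    (C C' P P' : ZComplex R)
    (ψ : ∀ n, C.X n →ₗ[R] P.X n) (ζ : ∀ n, P.X n →ₗ[R] C.X n)
    (ψ' : ∀ n, C'.X n →ₗ[R] P'.X n) (ζ' : ∀ n, P'.X n →ₗ[R] C'.X n)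
    (α : ∀ n, P.X n →ₗ[R] P'.X n) (β : ∀ n, P'.X n →ₗ[R] P.X n)
    (t' : ∀ n, P'.X n →ₗ[R] P'.X (n+1)) (u : ∀ n, P.X n →ₗ[R] P.X (n+1))
    (s : ∀ n, C.X n →ₗ[R] C.X (n+1))
    (i i' j : ℤ) (hij : i ≤ j) (hi'j : i' ≤ j)
    (hψ : ∀ n, i < n → ∀ x, ψ n (C.d n x) = P.d n (ψ (n+1) x))
    (hζ : ∀ n, i < n → ∀ x, ζ n (P.d n x) = C.d n (ζ (n+1) x))
    (hα : ∀ (n : ℤ) (x : P.X (n+1)), α n (P.d n x) = P'.d n (α (n+1) x))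
    (hβ : ∀ (n : ℤ) (x : P'.X (n+1)), β n (P'.d n x) = P.d n (β (n+1) x))
    (ht' : ∀ n, i' < n → ∀ y : P'.X (n+1),
      ψ' (n+1) (ζ' (n+1) y) - y = P'.d (n+1) (t' (n+1) y) + t' n (P'.d n y))
    (hu : ∀ (n : ℤ) (x : P.X (n+1)),
      β (n+1) (α (n+1) x) - x = P.d (n+1) (u (n+1) x) + u n (P.d n x))
    (hs : ∀ n, i < n → ∀ x : C.X (n+1),
      ζ (n+1) (ψ (n+1) x) - x = C.d (n+1) (s (n+1) x) + s n (C.d n x)) :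
    ∃ Λ : ∀ n, C.X n →ₗ[R] C.X (n+1),
      ∀ n, j < n → ∀ x : C.X (n+1),
        ζ (n+1) (β (n+1) (ψ' (n+1) (ζ' (n+1) (α (n+1) (ψ (n+1) x))))) - x
          = C.d (n+1) (Λ (n+1) x) + Λ n (C.d n x) := by
  refine ⟨fun n => (ζ (n+1)).comp ((β (n+1)).comp ((t' n).comp ((α n).comp (ψ n))))
      + (ζ (n+1)).comp ((u n).comp (ψ n)) + s n, fun n hn x => ?_⟩
  have k1 : ψ' (n+1) (ζ' (n+1) (α (n+1) (ψ (n+1) x)))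
      = P'.d (n+1) (t' (n+1) (α (n+1) (ψ (n+1) x)))
        + t' n (P'.d n (α (n+1) (ψ (n+1) x))) + α (n+1) (ψ (n+1) x) := by
    rw [← ht' n (by omega) (α (n+1) (ψ (n+1) x))]; abel
  have k2 : β (n+1) (α (n+1) (ψ (n+1) x))
      = P.d (n+1) (u (n+1) (ψ (n+1) x)) + u n (P.d n (ψ (n+1) x)) + ψ (n+1) x := by
    rw [← hu n (ψ (n+1) x)]; abel
  have k3 : ζ (n+1) (ψ (n+1) x)
      = C.d (n+1) (s (n+1) x) + s n (C.d n x) + x := by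
    rw [← hs n (by omega) x]; abel
  simp only [LinearMap.add_apply, LinearMap.comp_apply]
  rw [k1]
  simp only [map_add]
  rw [hβ (n+1) (t' (n+1) (α (n+1) (ψ (n+1) x)))]
  simp only [hζ (n+1) (by omega : i < n + 1)]
  rw [k2]
  simp only [map_add, hζ (n+1) (by omega : i < n + 1)]
  rw [k3, ← hα n (ψ (n+1) x), ← hψ n (by omega) x]
  abel

/-- Avramov–Martsinkovsky: complete resolutions are unique up to
homotopy equivalence. -/
theorem complete_resolutions_homotopy_equivalent
    (M : Type v) [AddCommGroup M] [Module R M]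
    (C C' : ZComplex R)
    (hC : C.IsCompleteResolution M) (hC' : C'.IsCompleteResolution M) :
    ∃ (γ : ∀ n, C.X n →ₗ[R] C'.X n) (δ : ∀ n, C'.X n →ₗ[R] C.X n),
      (∀ (n : ℤ) (x : C.X (n + 1)), γ n (C.d n x) = C'.d n (γ (n + 1) x)) ∧
      (∀ (n : ℤ) (x : C'.X (n + 1)), δ n (C'.d n x) = C.d n (δ (n + 1) x)) ∧
      (∃ h : ∀ n, C.X n →ₗ[R] C.X (n + 1),
        ∀ (n : ℤ) (x : C.X (n + 1)),
          δ (n + 1) (γ (n + 1) x) - x = C.d (n + 1) (h (n + 1) x) + h n (C.d n x)) ∧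
      (∃ k : ∀ n, C'.X n →ₗ[R] C'.X (n + 1),
        ∀ (n : ℤ) (x : C'.X (n + 1)),
          γ (n + 1) (δ (n + 1) x) - x = C'.d (n + 1) (k (n + 1) x) + k n (C'.d n x)) := by
  obtain ⟨⟨hCfree, hCfin, hCex, hCdual⟩, P, hP,
    i, ψ, ζ, hψ, hζ, ⟨s, hs, hs0⟩, ⟨t, ht, ht0⟩⟩ := hC
  obtain ⟨⟨hC'free, hC'fin, hC'ex, hC'dual⟩, P', hP',
    i', ψ', ζ', hψ', hζ', ⟨s', hs', hs'0⟩, ⟨t', ht', ht'0⟩⟩ := hC'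
  obtain ⟨ε, hεs, hεk⟩ := hP.2.2.2
  obtain ⟨ε', hε's, hε'k⟩ := hP'.2.2.2
  -- comparison maps between the projective resolutions
  obtain ⟨α, hα, hαε⟩ := ZComplex.exists_comparison P P' hP hP' ε ε' hεk hε's hε'k
  obtain ⟨β, hβ, hβε⟩ := ZComplex.exists_comparison P' P hP' hP ε' ε hε'k hεs hεk
  -- null-homotopy for βα - 1 on P
  have hu' : ∃ u : ∀ n, P.X n →ₗ[R] P.X (n+1),
      ∀ (n : ℤ) (x : P.X (n+1)),
        β (n+1) (α (n+1) x) - x = P.d (n+1) (u (n+1) x) + u n (P.d n x) := by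
    obtain ⟨u, hu⟩ := ZComplex.exists_nullhomotopy P hP ε hεk
      (fun n => (β n).comp (α n) - LinearMap.id)
      (fun n x => by
        simp only [LinearMap.sub_apply, LinearMap.comp_apply, LinearMap.id_apply, map_sub]
        rw [hα n x, hβ n (α (n+1) x)])
      (fun x => by
        simp only [LinearMap.sub_apply, LinearMap.comp_apply, LinearMap.id_apply, map_sub]
        rw [hβε (α 0 x), hαε x, sub_self])
    exact ⟨u, fun n x => by
      have := hu n x
      simpa only [LinearMap.sub_apply, LinearMap.comp_apply, LinearMap.id_apply] using this⟩
  obtain ⟨u, hu⟩ := hu'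
  -- null-homotopy for αβ - 1 on P'
  have hv' : ∃ v : ∀ n, P'.X n →ₗ[R] P'.X (n+1),
      ∀ (n : ℤ) (x : P'.X (n+1)),
        α (n+1) (β (n+1) x) - x = P'.d (n+1) (v (n+1) x) + v n (P'.d n x) := by
    obtain ⟨v, hv⟩ := ZComplex.exists_nullhomotopy P' hP' ε' hε'k
      (fun n => (α n).comp (β n) - LinearMap.id)
      (fun n x => by
        simp only [LinearMap.sub_apply, LinearMap.comp_apply, LinearMap.id_apply, map_sub]
        rw [hβ n x, hα n (β (n+1) x)])
      (fun x => by
        simp only [LinearMap.sub_apply, LinearMap.comp_apply, LinearMap.id_apply, map_sub]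
        rw [hαε (β 0 x), hβε x, sub_self])
    exact ⟨v, fun n x => by
      have := hv n x
      simpa only [LinearMap.sub_apply, LinearMap.comp_apply, LinearMap.id_apply] using this⟩
  obtain ⟨v, hv⟩ := hv'
  set j : ℤ := max i i' with hj
  -- the chain maps in high degrees
  obtain ⟨γ, hγcomm, hγtop⟩ := ZComplex.extend_chain C C' hCdual hC'free hC'fin j
    (fun n => (ζ' n).comp ((α n).comp (ψ n)))
    (fun n hn x => by
      simp only [LinearMap.comp_apply]
      rw [hψ n (by omega) x, hα n (ψ (n+1) x), hζ' n (by omega) (α (n+1) (ψ (n+1) x))])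
  obtain ⟨δ, hδcomm, hδtop⟩ := ZComplex.extend_chain C' C hC'dual hCfree hCfin j
    (fun n => (ζ n).comp ((β n).comp (ψ' n)))
    (fun n hn x => by
      simp only [LinearMap.comp_apply]
      rw [hψ' n (by omega) x, hβ n (ψ' (n+1) x), hζ n (by omega) (β (n+1) (ψ' (n+1) x))])
  -- homotopy δ ∘ γ ≃ 1 on C, in high degrees, then extended everywhere
  obtain ⟨Λ, hΛ⟩ := ZComplex.composite_homotopy C C' P P' ψ ζ ψ' ζ' α β t' u s
    i i' j (le_max_left _ _) (le_max_right _ _) hψ hζ hα hβ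
    (fun n hn y => by
      have := ht' n hn y
      simpa only [LinearMap.comp_apply] using this)
    hu
    (fun n hn x => by
      have := hs n hn x
      simpa only [LinearMap.comp_apply] using this)
  obtain ⟨L, hL⟩ := ZComplex.extend_homotopy C C hCdual hCfree hCfin j
    (fun n => (δ n).comp (γ n) - LinearMap.id)
    (fun n x => by
      simp only [LinearMap.sub_apply, LinearMap.comp_apply, LinearMap.id_apply, map_sub]
      rw [hγcomm n x, hδcomm n (γ (n+1) x)])
    Λ
    (fun n hn x => by
      simp only [LinearMap.sub_apply, LinearMap.comp_apply, LinearMap.id_apply]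
      rw [hγtop (n+1) (by omega), hδtop (n+1) (by omega)]
      simp only [LinearMap.comp_apply]
      exact hΛ n hn x)
  -- homotopy γ ∘ δ ≃ 1 on C', in high degrees, then extended everywhere
  obtain ⟨Λ', hΛ'⟩ := ZComplex.composite_homotopy C' C P' P ψ' ζ' ψ ζ β α t v s'
    i' i j (le_max_right _ _) (le_max_left _ _) hψ' hζ' hβ hα
    (fun n hn y => by
      have := ht n hn y
      simpa only [LinearMap.comp_apply] using this)
    hv
    (fun n hn x => by
      have := hs' n hn x
      simpa only [LinearMap.comp_apply] using this)
  obtain ⟨L', hL'⟩ := ZComplex.extend_homotopy C' C' hC'dual hC'free hC'fin j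
    (fun n => (γ n).comp (δ n) - LinearMap.id)
    (fun n x => by
      simp only [LinearMap.sub_apply, LinearMap.comp_apply, LinearMap.id_apply, map_sub]
      rw [hδcomm n x, hγcomm n (δ (n+1) x)])
    Λ'
    (fun n hn x => by
      simp only [LinearMap.sub_apply, LinearMap.comp_apply, LinearMap.id_apply]
      rw [hδtop (n+1) (by omega), hγtop (n+1) (by omega)]
      simp only [LinearMap.comp_apply]
      exact hΛ' n hn x)
  refine ⟨γ, δ, hγcomm, hδcomm, ⟨L, fun n x => ?_⟩, ⟨L', fun n x => ?_⟩⟩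
  · have := hL n x
    simpa only [LinearMap.sub_apply, LinearMap.comp_apply, LinearMap.id_apply] using this
  · have := hL' n x
    simpa only [LinearMap.sub_apply, LinearMap.comp_apply, LinearMap.id_apply] using this
end

section
/- Let R be a ring, C a totally acyclic complex of R-modules, and C' a chain complex of finitely generated free R-modules. Fix an integer l, and suppose given R-linear maps γ_n : C_n → C'_n for all n > l satisfying d'_{n+1}∘γ_{n+1} = γ_n∘d_{n+1} for all n > l. Then there exist R-linear maps γ_n : C_n → C'_n for all n ≤ l such that the resulting full family (γ_n)_{n∈ℤ} is a chain map C → C', i.e. d'_{n+1}∘γ_{n+1} = γ_n∘d_{n+1} for all n ∈ ℤ. -/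
/-!
Below degree `l` the map is built one degree at a time. If `γ_{n+1}` is already a chain map in
the degrees above, then `φ = d'_n ∘ γ_{n+1}` kills the boundaries `d_{n+1}(C_{n+2})`, so every
functional `C'_n → R` composed with `φ` factors through `d_n` by exactness of `Hom_R(C, R)`.
Since `C'_n` is finite free, it is a finite product of copies of `R`, so `φ` itself factors as
`γ_n ∘ d_n`, and `γ_n` is again a chain map in the degrees above `n - 1`.
-/

universe u v

variable {R : Type u} [Ring R]

theorem LinearMap.exists_comp_eq_of_forall_dual_comp {M N F : Type*}
    [AddCommGroup M] [Module R M] [AddCommGroup N] [Module R N]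
    [AddCommGroup F] [Module R F] [Module.Free R F] [Module.Finite R F]
    (d : M →ₗ[R] N) (φ : M →ₗ[R] F) (hφ : ∀ g : F →ₗ[R] R, ∃ h : N →ₗ[R] R, g ∘ₗ φ = h ∘ₗ d) :
    ∃ f : N →ₗ[R] F, f ∘ₗ d = φ := by
  let b := Module.Free.chooseBasis R F
  choose h hh using fun i => hφ (b.coord i)
  refine ⟨b.equivFun.symm.toLinearMap ∘ₗ LinearMap.pi h, ?_⟩
  ext x
  apply b.equivFun.injective
  ext i
  simp only [LinearMap.comp_apply, LinearEquiv.coe_coe, LinearEquiv.apply_symm_apply,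
    LinearMap.pi_apply, Module.Basis.equivFun_apply]
  exact (LinearMap.congr_fun (hh i) x).symm

namespace ZComplex

variable {C C' : ZComplex R}

theorem IsTotallyAcyclic.exists_comp_d_eq (hC : C.IsTotallyAcyclic) {F : Type*}
    [AddCommGroup F] [Module R F] [Module.Free R F] [Module.Finite R F]
    (n : ℤ) (φ : C.X (n + 1) →ₗ[R] F) (hφ : ∀ x, φ (C.d (n + 1) x) = 0) :
    ∃ f : C.X n →ₗ[R] F, ∀ x, f (C.d n x) = φ x := by
  have hdual (g : F →ₗ[R] R) : ∃ h : C.X n →ₗ[R] R, g ∘ₗ φ = h ∘ₗ C.d n :=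
    (hC.2.2.2 n (g ∘ₗ φ) fun x => by rw [LinearMap.comp_apply, hφ, map_zero]).imp
      fun _ hh => LinearMap.ext hh
  obtain ⟨f, hf⟩ := LinearMap.exists_comp_eq_of_forall_dual_comp (C.d n) φ hdual
  exact ⟨f, LinearMap.congr_fun hf⟩

variable (C C') in
/-- For `n ≤ l` the map is chosen by `Classical.epsilon`, so it is `0` if no map commutes with the
one in degree `n + 1`; `extendDown_comp_d` shows that one always does. -/
noncomputable def extendDown (l : ℤ) (γ : ∀ n : ℤ, l < n → (C.X n →ₗ[R] C'.X n)) (n : ℤ) :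
    C.X n →ₗ[R] C'.X n :=
  if h : l < n then γ n h
  else Classical.epsilon fun f : C.X n →ₗ[R] C'.X n =>
    ∀ x, f (C.d n x) = C'.d n (extendDown l γ (n + 1) x)
termination_by (l + 1 - n).toNat
decreasing_by omega

theorem extendDown_of_lt {l : ℤ} (γ : ∀ n : ℤ, l < n → (C.X n →ₗ[R] C'.X n)) {n : ℤ}
    (hn : l < n) : extendDown C C' l γ n = γ n hn := by
  rw [extendDown, dif_pos hn]

theorem extendDown_of_le {l : ℤ} (γ : ∀ n : ℤ, l < n → (C.X n →ₗ[R] C'.X n)) {n : ℤ}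
    (hn : n ≤ l) : extendDown C C' l γ n = Classical.epsilon fun f : C.X n →ₗ[R] C'.X n =>
      ∀ x, f (C.d n x) = C'.d n (extendDown C C' l γ (n + 1) x) := by
  rw [extendDown, dif_neg (not_lt.2 hn)]

theorem extendDown_comp_d (hC : C.IsTotallyAcyclic)
    (hfree : ∀ n, Module.Free R (C'.X n)) (hfin : ∀ n, Module.Finite R (C'.X n))
    {l : ℤ} (γ : ∀ n : ℤ, l < n → (C.X n →ₗ[R] C'.X n))
    (hγ : ∀ (n : ℤ) (hn : l < n) (x : C.X (n + 1)),
      γ n hn (C.d n x) = C'.d n (γ (n + 1) (hn.trans (lt_add_one n)) x))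
    (n : ℤ) (x : C.X (n + 1)) :
    extendDown C C' l γ n (C.d n x) = C'.d n (extendDown C C' l γ (n + 1) x) := by
  rcases lt_or_ge l n with hn | hn
  · rw [extendDown_of_lt γ hn, extendDown_of_lt γ (by omega)]
    exact hγ n hn x
  · have := hfree n
    have := hfin n
    have hcycle : ∀ y, C'.d n (extendDown C C' l γ (n + 1) (C.d (n + 1) y)) = 0 := fun y => by
      rw [extendDown_comp_d hC hfree hfin γ hγ (n + 1) y]
      exact C'.dd n _
    rw [extendDown_of_le γ hn]
    exact Classical.epsilon_spec (hC.exists_comp_d_eq n (C'.d n ∘ₗ extendDown C C' l γ (n + 1))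
      hcycle) x
termination_by (l + 1 - n).toNat
decreasing_by omega

end ZComplex

/-- a partially defined chain map from a totally acyclic complex to a
complex of finitely generated free modules, given in degrees `> l`, can be completed to a
chain map in all degrees. -/
theorem chain_map_extends_downward
    (C C' : ZComplex R)
    (hC : C.IsTotallyAcyclic)
    (hfree : ∀ n, Module.Free R (C'.X n)) (hfin : ∀ n, Module.Finite R (C'.X n))
    (l : ℤ)
    (γ : ∀ n : ℤ, l < n → (C.X n →ₗ[R] C'.X n))
    (hγ : ∀ (n : ℤ) (hn : l < n) (x : C.X (n + 1)),
      γ n hn (C.d n x) = C'.d n (γ (n + 1) (by omega) x)) :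
    ∃ γ' : ∀ n : ℤ, C.X n →ₗ[R] C'.X n,
      (∀ (n : ℤ) (hn : l < n), γ' n = γ n hn) ∧
      (∀ (n : ℤ) (x : C.X (n + 1)), γ' n (C.d n x) = C'.d n (γ' (n + 1) x)) :=
  ⟨ZComplex.extendDown C C' l γ, fun _ hn => ZComplex.extendDown_of_lt γ hn,
    ZComplex.extendDown_comp_d hC hfree hfin γ hγ⟩
end

section
/- With the lifting setup below, for each k with 1 ≤ k ≤ c, the family of maps t_{k,n} = t̃_{k,n} ⊗_Q R : C_n → C_{n−2} commutes with the differentials of C: for every n, d_{n−2}∘t_{k,n} = t_{k,n−1}∘d_n as maps C_n → C_{n−3}. In other words, each Eisenbud operator t_k is a chain map from C to its second shift. -/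
/-!
Put `m_k = d̃ t̃_k − t̃_k d̃`. Expanding `d̃ ∘ d̃ ∘ d̃` in two ways gives the relation
`Σ f_k m_k = 0`, and the point is that a regular sequence only has relations whose
coefficients lie in `I = (f_1,…,f_c)` (vanishing of the first Koszul homology). By induction
on `c`: regularity of `f_c` modulo `(f_1,…,f_{c-1})` puts `m_c` into `(f_1,…,f_{c-1})M`, and
writing `m_c = Σ_{j<c} f_j y_j` turns the relation into one of length `c - 1` with coefficients
`m_j + f_c y_j`. Regularity passes from `Q` to the free module `C̃`, so `m_k ∈ I C̃`, which
dies after tensoring with `R = Q/I`.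
-/

open TensorProduct

/-- The quotient ring `R = Q/(f₁,…,f_c)`. -/
abbrev Rquot (Q : Type) [CommRing Q] {c : ℕ} (f : Fin c → Q) : Type :=
  Q ⧸ Ideal.span (Set.range f)

section

variable {R M : Type*} [CommRing R] [AddCommGroup M] [Module R M]

theorem Ideal.ofList_ofFn {c : ℕ} (f : Fin c → R) :
    Ideal.ofList (List.ofFn f) = Ideal.span (Set.range f) := by
  simp only [Ideal.ofList, List.mem_ofFn', Set.ofPred_mem_eq]

theorem Submodule.exists_sum_smul_eq_of_mem_span_range_smul_top {ι : Type*} [Fintype ι]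
    {g : ι → R} {x : M} (hx : x ∈ Ideal.span (Set.range g) • (⊤ : Submodule R M)) :
    ∃ y : ι → M, ∑ i, g i • y i = x := by
  refine Submodule.smul_induction_on hx (fun r hr m _ => ?_) fun _ _ ⟨y, hy⟩ ⟨y', hy'⟩ => ?_
  · obtain ⟨a, rfl⟩ := (Submodule.mem_span_range_iff_exists_fun R).mp hr
    exact ⟨fun i => a i • m, by simp only [Finset.sum_smul, smul_smul, mul_comm, smul_eq_mul]⟩
  · exact ⟨y + y', by simp only [Pi.add_apply, smul_add, Finset.sum_add_distrib, hy, hy']⟩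

namespace RingTheory.Sequence.IsWeaklyRegular

theorem isWeaklyRegular_of_flat {rs : List R} (h : IsWeaklyRegular R rs) [Module.Flat R M] :
    IsWeaklyRegular M rs :=
  (LinearEquiv.isWeaklyRegular_congr (TensorProduct.rid R M) rs).mp h.isWeaklyRegular_lTensor

theorem mem_smul_top_of_sum_smul_eq_zero {c : ℕ} {f : Fin c → R}
    (h : IsWeaklyRegular M (List.ofFn f)) {m : Fin c → M} (hm : ∑ i, f i • m i = 0) (i : Fin c) :
    m i ∈ Ideal.span (Set.range f) • (⊤ : Submodule R M) := by
  induction c with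
  | zero => exact i.elim0
  | succ c ih =>
    set I' := Ideal.span (Set.range fun j : Fin c => f j.castSucc)
    rw [List.ofFn_succ', List.concat_eq_append, isWeaklyRegular_append_iff,
      isWeaklyRegular_singleton_iff, Ideal.ofList_ofFn] at h
    obtain ⟨h_init, h_last⟩ := h
    rw [Fin.sum_univ_castSucc] at hm
    have h_last_mem : m (Fin.last c) ∈ I' • (⊤ : Submodule R M) := by
      rw [← Submodule.Quotient.mk_eq_zero]
      refine h_last.right_eq_zero_of_smul ?_
      rw [← Submodule.Quotient.mk_smul, eq_neg_of_add_eq_zero_right hm,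
        Submodule.Quotient.mk_eq_zero]
      refine neg_mem (Submodule.sum_mem _ fun j _ => Submodule.smul_mem_smul ?_ trivial)
      exact Ideal.subset_span ⟨j, rfl⟩
    obtain ⟨y, hy⟩ := Submodule.exists_sum_smul_eq_of_mem_span_range_smul_top h_last_mem
    have hrel : ∑ j : Fin c, f j.castSucc • (m j.castSucc + f (Fin.last c) • y j) = 0 := by
      simp only [smul_add, Finset.sum_add_distrib, smul_comm (f _) (f (Fin.last c)),
        ← Finset.smul_sum, hy, hm]
    have hle : I' • (⊤ : Submodule R M) ≤ Ideal.span (Set.range f) • ⊤ :=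
      Submodule.smul_mono_left (Ideal.span_mono (Set.range_comp_subset_range _ _))
    refine Fin.lastCases (hle h_last_mem) (fun j => ?_) i
    rw [← add_sub_cancel_right (m j.castSucc) (f (Fin.last c) • y j)]
    exact sub_mem (hle (ih h_init hrel j))
      (Submodule.smul_mem_smul (Ideal.subset_span ⟨Fin.last c, rfl⟩) trivial)

end RingTheory.Sequence.IsWeaklyRegular

theorem TensorProduct.tmul_eq_zero_of_mem_smul_top {I : Ideal R} {v : M}
    (hv : v ∈ I • (⊤ : Submodule R M)) (r : R ⧸ I) : r ⊗ₜ[R] v = 0 := by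
  obtain ⟨a, rfl⟩ := Ideal.Quotient.mk_surjective r
  refine (quotTensorEquivQuotSMul M I).map_eq_zero_iff.mp ?_
  rw [quotTensorEquivQuotSMul_mk_tmul, Submodule.Quotient.mk_eq_zero]
  exact Submodule.smul_mem _ a hv

theorem LinearMap.baseChange_quotient_eq_of_sub_mem_smul_top {N : Type*} [AddCommGroup N]
    [Module R N] {I : Ideal R} {φ ψ : M →ₗ[R] N} (h : ∀ x, φ x - ψ x ∈ I • (⊤ : Submodule R N)) :
    φ.baseChange (R ⧸ I) = ψ.baseChange (R ⧸ I) := by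
  rw [← sub_eq_zero, ← LinearMap.baseChange_sub]
  refine TensorProduct.AlgebraTensorModule.ext fun r x => ?_
  rw [baseChange_tmul, sub_apply, zero_apply]
  exact TensorProduct.tmul_eq_zero_of_mem_smul_top (h x) r

end

theorem eisenbud_operator_is_chain_map_general
    (Q : Type) [CommRing Q] (c : ℕ) (f : Fin c → Q)
    (hreg : RingTheory.Sequence.IsRegular Q (List.ofFn f))
    (Ct : ℤ → Type) [∀ n, AddCommGroup (Ct n)] [∀ n, Module Q (Ct n)]
    (hfree : ∀ n, Module.Free Q (Ct n))
    (dt : ∀ n : ℤ, Ct (n + 1) →ₗ[Q] Ct n)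
    (tt : Fin c → ∀ n : ℤ, Ct (n + 1 + 1) →ₗ[Q] Ct n)
    (hdd : ∀ (n : ℤ) (x : Ct (n + 1 + 1)),
      dt n (dt (n + 1) x) = ∑ k, f k • tt k n x) :
    ∀ (k : Fin c) (n : ℤ) (x : Rquot Q f ⊗[Q] Ct (n + 1 + 1 + 1)),
      (dt n).baseChange (Rquot Q f) ((tt k (n + 1)).baseChange (Rquot Q f) x) =
        (tt k n).baseChange (Rquot Q f) ((dt (n + 1 + 1)).baseChange (Rquot Q f) x) := by
  intro k n x
  have := hfree n
  have hreg_Ct := hreg.toIsWeaklyRegular.isWeaklyRegular_of_flat (M := Ct n)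
  have hrel (y : Ct (n + 1 + 1 + 1)) :
      ∑ k, f k • (dt n (tt k (n + 1) y) - tt k n (dt (n + 1 + 1) y)) = 0 := by
    simp_rw [smul_sub, Finset.sum_sub_distrib, ← (dt n).map_smul]
    rw [← map_sum, ← hdd, ← hdd, sub_self]
  have hcomm : ((dt n).comp (tt k (n + 1))).baseChange (Rquot Q f) =
      ((tt k n).comp (dt (n + 1 + 1))).baseChange (Rquot Q f) :=
    LinearMap.baseChange_quotient_eq_of_sub_mem_smul_top fun y =>
      hreg_Ct.mem_smul_top_of_sum_smul_eq_zero (hrel y) k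
  simpa only [LinearMap.baseChange_comp, LinearMap.comp_apply] using LinearMap.congr_fun hcomm x

/-- Eisenbud: each Eisenbud operator `t_k` commutes with the
differentials of `C`, i.e. is a chain map `C → Σ²C`. -/
theorem eisenbud_operator_is_chain_map
    (Q : Type) [CommRing Q] (c : ℕ) (f : Fin c → Q)
    (hreg : RingTheory.Sequence.IsRegular Q (List.ofFn f))
    (Ct : ℤ → Type) [∀ n, AddCommGroup (Ct n)] [∀ n, Module Q (Ct n)]
    (hfree : ∀ n, Module.Free Q (Ct n)) (hfin : ∀ n, Module.Finite Q (Ct n))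
    (dt : ∀ n : ℤ, Ct (n + 1) →ₗ[Q] Ct n)
    (tt : Fin c → ∀ n : ℤ, Ct (n + 1 + 1) →ₗ[Q] Ct n)
    (hdd : ∀ (n : ℤ) (x : Ct (n + 1 + 1)),
      dt n (dt (n + 1) x) = ∑ k, f k • tt k n x) :
    ∀ (k : Fin c) (n : ℤ) (x : Rquot Q f ⊗[Q] Ct (n + 1 + 1 + 1)),
      (dt n).baseChange (Rquot Q f) ((tt k (n + 1)).baseChange (Rquot Q f) x) =
        (tt k n).baseChange (Rquot Q f) ((dt (n + 1 + 1)).baseChange (Rquot Q f) x) :=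
  eisenbud_operator_is_chain_map_general Q c f hreg Ct hfree dt tt hdd
end

section
/- Let Q and Q' be commutative rings, f_1,…,f_c a Q-regular sequence, f'_1,…,f'_{c'} a Q'-regular sequence, R = Q/(f_1,…,f_c) and R' = Q'/(f'_1,…,f'_{c'}). Let α : Q → Q' be a ring homomorphism with α(f_i) = Σ_{j=1}^{c'} a_{ij} f'_j for elements a_{ij} ∈ Q', so that α induces a ring homomorphism R → R'. Let C be a chain complex of R-modules with lift (C̃, d̃) and maps t̃_i satisfying d̃∘d̃ = Σ_i f_i·t̃_i, and Eisenbud operators t_i = t̃_i ⊗_Q R. Consider the R'-complex C' = R' ⊗_R C, which has the lift (Q' ⊗_Q C̃, 1⊗d̃) over Q'. Then for any Q'-linear maps ũ_j : Q' ⊗_Q C̃_n → Q' ⊗_Q C̃_{n−2} satisfying (1⊗d̃)_{n−1}∘(1⊗d̃)_n = Σ_{j=1}^{c'} f'_j·ũ_{j,n}, the operators u_j = ũ_j ⊗_{Q'} R' on C' are homotopic to Σ_{i=1}^c a_{ij}·(R' ⊗_R t_i): there exist R'-linear maps λ_n : C'_n → C'_{n−1} with u_{j,n} − Σ_i a_{ij}(R'⊗t_i)_n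 = d^{C'}_{n−1}∘λ_n + λ_{n−1}∘d^{C'}_n. -/
/-!
The homotopy can be taken to be zero. Both `ũⱼ` and `Σᵢ aᵢⱼ (1 ⊗ t̃ᵢ)` decompose the same map
`(1 ⊗ d̃)² = Σᵢ α(fᵢ) (1 ⊗ t̃ᵢ) = Σⱼ f'ⱼ (Σᵢ aᵢⱼ (1 ⊗ t̃ᵢ))` along `f'`. As `f'` is a regular
sequence on the free `Q'`-module `Q' ⊗ C̃ₙ`, its first Koszul homology vanishes: the
coefficients of any relation `Σⱼ f'ⱼ pⱼ = 0` lie in `(f') (Q' ⊗ C̃ₙ)`. Hence the two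
decompositions agree modulo `(f')`, i.e. after tensoring with `R'`.
-/

open TensorProduct

open RingTheory.Sequence

namespace Submodule

variable {R M : Type*} [CommSemiring R] [AddCommMonoid M] [Module R M]

theorem mem_span_range_smul_top_iff {ι : Type*} [Fintype ι] (g : ι → R) (y : M) :
    y ∈ (Ideal.span (Set.range g) • ⊤ : Submodule R M) ↔ ∃ q : ι → M, y = ∑ j, g j • q j := by
  constructor
  · intro hy
    refine smul_induction_on (p := fun y => ∃ q : ι → M, y = ∑ j, g j • q j) hy ?_ ?_
    · rintro r hr x -
      obtain ⟨c, rfl⟩ := (mem_span_range_iff_exists_fun R).mp hr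
      exact ⟨fun j => c j • x, by simp only [Finset.sum_smul, smul_smul, smul_eq_mul, mul_comm]⟩
    · rintro x y ⟨q₁, rfl⟩ ⟨q₂, rfl⟩
      exact ⟨q₁ + q₂, by simp only [Pi.add_apply, smul_add, Finset.sum_add_distrib]⟩
  · rintro ⟨q, rfl⟩
    exact sum_mem fun j _ => smul_mem_smul (Ideal.subset_span ⟨j, rfl⟩) mem_top

end Submodule

namespace RingTheory.Sequence.IsWeaklyRegular

variable {R M : Type*} [CommRing R] [AddCommGroup M] [Module R M]

theorem of_flat_module [Module.Flat R M] {rs : List R} (h : IsWeaklyRegular R rs) :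
    IsWeaklyRegular M rs :=
  ((TensorProduct.lid R M).isWeaklyRegular_congr rs).mp h.isWeaklyRegular_rTensor

/-- The relation `Σⱼ gⱼ pⱼ = 0` forces `p_last ∈ (g₀, …, g_{m-1}) M`, say `p_last = Σₖ gₖ qₖ`;
then `pₖ + g_last qₖ` is a relation for the shorter sequence. -/
theorem mem_span_smul_top_of_sum_smul_eq_zero : ∀ {m : ℕ} {g : Fin m → R},
    IsWeaklyRegular M (List.ofFn g) → ∀ {p : Fin m → M}, ∑ j, g j • p j = 0 →
      ∀ j, p j ∈ (Ideal.span (Set.range g) • ⊤ : Submodule R M)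
  | 0, _, _, _, _, j => j.elim0
  | m + 1, g, hg, p, hp, j => by
    set I : Ideal R := Ideal.span (Set.range fun k : Fin m => g k.castSucc)
    have hI : I ≤ Ideal.span (Set.range g) :=
      Ideal.span_mono (Set.range_comp_subset_range Fin.castSucc g)
    have hofList : Ideal.ofList (List.ofFn fun k : Fin m => g k.castSucc) = I := by
      simp only [Ideal.ofList, List.mem_ofFn', Set.ofPred_mem_eq, I]
    rw [List.ofFn_succ', List.concat_eq_append, isWeaklyRegular_append_iff,
      isWeaklyRegular_singleton_iff, hofList] at hg
    obtain ⟨hinit, hlast⟩ := hg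
    rw [Fin.sum_univ_castSucc] at hp
    have hp_last : p (Fin.last m) ∈ (I • ⊤ : Submodule R M) := by
      refine mem_of_isSMulRegular_quotient_of_smul_mem hlast ?_
      rw [eq_neg_of_add_eq_zero_right hp, Submodule.neg_mem_iff,
        Submodule.mem_span_range_smul_top_iff]
      exact ⟨_, rfl⟩
    obtain ⟨q, hq⟩ := (Submodule.mem_span_range_smul_top_iff _ _).mp hp_last
    have hp' : ∑ k : Fin m, g k.castSucc • (p k.castSucc + g (Fin.last m) • q k) = 0 := by
      simp only [smul_add, Finset.sum_add_distrib, smul_comm (g _) (g (Fin.last m)),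
        ← Finset.smul_sum, ← hq, hp]
    have hmem k :=
      Submodule.smul_mono_left hI (mem_span_smul_top_of_sum_smul_eq_zero hinit hp' k)
    refine Fin.lastCases (Submodule.smul_mono_left hI hp_last) (fun k => ?_) j
    rw [← add_sub_cancel_right (p k.castSucc) (g (Fin.last m) • q k)]
    exact sub_mem (hmem k) (Submodule.smul_mem_smul (Ideal.subset_span ⟨_, rfl⟩) trivial)

end RingTheory.Sequence.IsWeaklyRegular

namespace LinearMap

theorem baseChange_sum {R M N : Type*} [CommSemiring R] [AddCommMonoid M] [Module R M]
    [AddCommMonoid N] [Module R N] (A : Type*) [Semiring A] [Algebra R A] {ι : Type*}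
    (s : Finset ι) (φ : ι → M →ₗ[R] N) :
    (∑ i ∈ s, φ i).baseChange A = ∑ i ∈ s, (φ i).baseChange A :=
  map_sum (baseChangeHom R A M N) φ s

variable {R M N : Type*} [CommRing R] [AddCommGroup M] [Module R M] [AddCommGroup N] [Module R N]

theorem baseChange_quotient_eq_zero {I : Ideal R} {φ : M →ₗ[R] N}
    (h : ∀ x, φ x ∈ (I • ⊤ : Submodule R N)) : φ.baseChange (R ⧸ I) = 0 := by
  refine AlgebraTensorModule.ext fun r x => ?_
  rw [baseChange_tmul, zero_apply, ← mul_one r, ← smul_eq_mul, ← smul_tmul',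
    ← quotTensorEquivQuotSMul_symm_mk, (Submodule.Quotient.mk_eq_zero _).mpr (h x), map_zero,
    smul_zero]

theorem baseChange_quotient_eq_of_sum_smul_eq {m : ℕ} {g : Fin m → R}
    (hg : IsWeaklyRegular N (List.ofFn g)) {u v : Fin m → M →ₗ[R] N}
    (huv : ∑ j, g j • u j = ∑ j, g j • v j) (j : Fin m) :
    (u j).baseChange (R ⧸ Ideal.span (Set.range g)) =
      (v j).baseChange (R ⧸ Ideal.span (Set.range g)) := by
  rw [← sub_eq_zero, ← baseChange_sub]
  refine baseChange_quotient_eq_zero fun x => ?_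
  refine hg.mem_span_smul_top_of_sum_smul_eq_zero (p := fun j => (u j - v j) x) ?_ j
  simpa only [sub_apply, smul_sub, Finset.sum_sub_distrib, sub_eq_zero, sum_apply, smul_apply]
    using congr($huv x)

end LinearMap

theorem eisenbud_operators_change_of_rings_general
    (Q Q' : Type) [CommRing Q] [CommRing Q'] [Algebra Q Q']
    (c c' : ℕ) (f : Fin c → Q) (f' : Fin c' → Q')
    (hreg' : RingTheory.Sequence.IsRegular Q' (List.ofFn f'))
    (a : Fin c → Fin c' → Q')
    (ha : ∀ i : Fin c, algebraMap Q Q' (f i) = ∑ j, a i j * f' j)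
    (Ct : ℤ → Type) [∀ n, AddCommGroup (Ct n)] [∀ n, Module Q (Ct n)]
    (hfree : ∀ n, Module.Free Q (Ct n))
    (dt : ∀ n : ℤ, Ct (n + 1) →ₗ[Q] Ct n)
    (tt : Fin c → ∀ n : ℤ, Ct (n + 1 + 1) →ₗ[Q] Ct n)
    (hdd : ∀ (n : ℤ) (x : Ct (n + 1 + 1)),
      dt n (dt (n + 1) x) = ∑ i, f i • tt i n x)
    -- maps `ũⱼ` decomposing the square of the lifted differential `1 ⊗ d̃` of `C'`
    (uu : Fin c' → ∀ n : ℤ, (Q' ⊗[Q] Ct (n + 1 + 1)) →ₗ[Q'] (Q' ⊗[Q] Ct n))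
    (huu : ∀ (n : ℤ) (x : Q' ⊗[Q] Ct (n + 1 + 1)),
      (dt n).baseChange Q' ((dt (n + 1)).baseChange Q' x) = ∑ j, f' j • uu j n x) :
    ∀ j : Fin c',
      ∃ lam : ∀ n : ℤ,
          (Rquot Q' f' ⊗[Q'] (Q' ⊗[Q] Ct (n + 1))) →ₗ[Rquot Q' f']
            (Rquot Q' f' ⊗[Q'] (Q' ⊗[Q] Ct n)),
        ∀ (n : ℤ) (x : Rquot Q' f' ⊗[Q'] (Q' ⊗[Q] Ct (n + 1 + 1))),
          (uu j n).baseChange (Rquot Q' f') x -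
              ∑ i, algebraMap Q' (Rquot Q' f') (a i j) •
                ((tt i n).baseChange Q').baseChange (Rquot Q' f') x =
            ((dt n).baseChange Q').baseChange (Rquot Q' f') (lam (n + 1) x) +
              lam n (((dt (n + 1)).baseChange Q').baseChange (Rquot Q' f') x) := by
  intro j
  refine ⟨fun _ => 0, fun n x => ?_⟩
  have : Module.Free Q (Ct n) := hfree n
  let tt' i := (tt i n).baseChange Q'
  have hdd' : (dt n).baseChange Q' ∘ₗ (dt (n + 1)).baseChange Q' =
      ∑ i, algebraMap Q Q' (f i) • tt' i := by
    have hsq : dt n ∘ₗ dt (n + 1) = ∑ i, f i • tt i n := by ext x; simpa using hdd n x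
    simp only [← LinearMap.baseChange_comp, hsq, LinearMap.baseChange_sum,
      LinearMap.baseChange_smul, algebraMap_smul, tt']
  have hu : ∑ j, f' j • uu j n = (dt n).baseChange Q' ∘ₗ (dt (n + 1)).baseChange Q' :=
    LinearMap.ext fun x => by simpa using (huu n x).symm
  have hv : ∑ j, f' j • ∑ i, a i j • tt' i = ∑ i, algebraMap Q Q' (f i) • tt' i := by
    simp_rw [ha, Finset.sum_smul, Finset.smul_sum, smul_smul, mul_comm]
    exact Finset.sum_comm
  have key := LinearMap.baseChange_quotient_eq_of_sum_smul_eq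
    hreg'.toIsWeaklyRegular.of_flat_module (hu.trans (hdd'.trans hv.symm)) j
  simp only [LinearMap.zero_apply, map_zero, add_zero, key, LinearMap.baseChange_sum,
    LinearMap.baseChange_smul, LinearMap.sum_apply, LinearMap.smul_apply, algebraMap_smul, tt',
    sub_self]

/-- behaviour of Eisenbud operators under change of rings. -/
theorem eisenbud_operators_change_of_rings
    (Q Q' : Type) [CommRing Q] [CommRing Q'] [Algebra Q Q']
    (c c' : ℕ) (f : Fin c → Q) (f' : Fin c' → Q')
    (hreg : RingTheory.Sequence.IsRegular Q (List.ofFn f))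
    (hreg' : RingTheory.Sequence.IsRegular Q' (List.ofFn f'))
    (a : Fin c → Fin c' → Q')
    (ha : ∀ i : Fin c, algebraMap Q Q' (f i) = ∑ j, a i j * f' j)
    (Ct : ℤ → Type) [∀ n, AddCommGroup (Ct n)] [∀ n, Module Q (Ct n)]
    (hfree : ∀ n, Module.Free Q (Ct n)) (hfin : ∀ n, Module.Finite Q (Ct n))
    (dt : ∀ n : ℤ, Ct (n + 1) →ₗ[Q] Ct n)
    (tt : Fin c → ∀ n : ℤ, Ct (n + 1 + 1) →ₗ[Q] Ct n)
    (hdd : ∀ (n : ℤ) (x : Ct (n + 1 + 1)),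
      dt n (dt (n + 1) x) = ∑ i, f i • tt i n x)
    -- maps `ũⱼ` decomposing the square of the lifted differential `1 ⊗ d̃` of `C'`
    (uu : Fin c' → ∀ n : ℤ, (Q' ⊗[Q] Ct (n + 1 + 1)) →ₗ[Q'] (Q' ⊗[Q] Ct n))
    (huu : ∀ (n : ℤ) (x : Q' ⊗[Q] Ct (n + 1 + 1)),
      (dt n).baseChange Q' ((dt (n + 1)).baseChange Q' x) = ∑ j, f' j • uu j n x) :
    ∀ j : Fin c',
      ∃ lam : ∀ n : ℤ,
          (Rquot Q' f' ⊗[Q'] (Q' ⊗[Q] Ct (n + 1))) →ₗ[Rquot Q' f']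
            (Rquot Q' f' ⊗[Q'] (Q' ⊗[Q] Ct n)),
        ∀ (n : ℤ) (x : Rquot Q' f' ⊗[Q'] (Q' ⊗[Q] Ct (n + 1 + 1))),
          (uu j n).baseChange (Rquot Q' f') x -
              ∑ i, algebraMap Q' (Rquot Q' f') (a i j) •
                ((tt i n).baseChange Q').baseChange (Rquot Q' f') x =
            ((dt n).baseChange Q').baseChange (Rquot Q' f') (lam (n + 1) x) +
              lam n (((dt (n + 1)).baseChange Q').baseChange (Rquot Q' f') x) :=
  eisenbud_operators_change_of_rings_general Q Q' c c' f f' hreg' a ha Ct hfree dt tt hdd uu huu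
end

section
/- Let A be a commutative noetherian ring graded in non-negative degrees, and let A[x] be the polynomial ring with x homogeneous of degree d_x > 0. Let F be a graded A-module with F^i = 0 for i < 0, regarded as a graded A[x]-module via the map A[x] → A sending x to 0, and let E be a graded A[x]-module with E^i = 0 for i < 0. Suppose there exist graded A[x]-module homomorphisms ψ : E → F of degree d_ψ ≥ 0 and φ : F → E of degree d_φ ≥ 0 such that for every i the sequence F^i →(φ) E^{i+d_φ} →(x·) E^{i+d_φ+d_x} →(ψ) F^{i+d_φ+d_x+d_ψ} →(φ) E^{i+2d_φ+d_x+d_ψ} is exact (i.e. the ℤ-graded sequence ⋯ → F → E → E → F → ⋯ with maps φ, multiplication by x, and ψ is exact at each spot). Then F is a finitely generated graded A-module if and only if E is a finitely generated graded A[x]-module. -/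
/-!
Exactness identifies `ker ψ` with `x E`, so `ψ` embeds `E / x E` into `F`. If `F` is finite over
the noetherian ring `A`, so is `E / x E`, and since `x` has positive degree and `E` lives in
non-negative degrees, the graded Nakayama lemma lifts homogeneous generators of `E / x E` to
generators of `E` over `B`.

Conversely, if `E` is finite over the noetherian ring `B = A[x]`, then in
`0 → ker φ → F → im φ → 0` both `im φ = ker (x •)` and `ker φ = im ψ` are images of finite
`B`-modules under `A`-linear maps killing multiplication by `x`. An `A`-submodule stable under `x`
is stable under `A[x] = B`, so the images of `B`-generators generate these over `A`.
-/

open DirectSum Pointwise Polynomial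

theorem LinearMap.exists_finite_sup_ker_eq_top {R M P : Type*} [Ring R] [AddCommGroup M]
    [Module R M] [AddCommGroup P] [Module R P] (f : M →ₗ[R] P) (hf : (range f).FG) :
    ∃ T : Set M, T.Finite ∧ Submodule.span R T ⊔ ker f = ⊤ := by
  obtain ⟨t, ht, hspan⟩ := Submodule.fg_def.mp hf
  have ht_range : t ⊆ f '' Set.univ := by
    rw [Set.image_univ]
    exact fun y hy => LinearMap.mem_range.mp (hspan.le (Submodule.subset_span hy))
  obtain ⟨T, -, hT, rfl⟩ := ht.exists_subset_finite_image_eq ht_range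
  refine ⟨T, hT, ?_⟩
  rw [← Submodule.comap_map_eq, Submodule.map_span, hspan, ← range_le_iff_comap]

section PolynomialScalars

variable {A B E : Type*} [CommSemiring A] [Semiring B] [Algebra A B]
  [AddCommMonoid E] [Module A E] [Module B E] [IsScalarTower A B E] {x : B}

theorem smul_mem_of_aeval_surjective (hx : Function.Surjective (aeval x : A[X] →ₐ[A] B))
    {p : Submodule A E} (hp : ∀ e ∈ p, x • e ∈ p) (b : B) {e : E} (he : e ∈ p) : b • e ∈ p := by
  have hpow : ∀ n : ℕ, ∀ e ∈ p, x ^ n • e ∈ p := by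
    intro n
    induction n with
    | zero => simp
    | succ n ih => exact fun e he => by rw [pow_succ, mul_smul]; exact ih _ (hp e he)
  obtain ⟨q, rfl⟩ := hx b
  induction q using Polynomial.induction_on' with
  | add f g hf hg => rw [map_add, add_smul]; exact p.add_mem hf hg
  | monomial n a =>
    rw [aeval_monomial, mul_smul, algebraMap_smul]
    exact p.smul_mem a (hpow n e he)

theorem span_restrictScalars_le_of_aeval_surjective
    (hx : Function.Surjective (aeval x : A[X] →ₐ[A] B)) {p : Submodule A E}
    (hp : ∀ e ∈ p, x • e ∈ p) {s : Set E} (hs : s ⊆ p) :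
    (Submodule.span B s).restrictScalars A ≤ p := by
  intro e he
  induction he using Submodule.span_induction with
  | mem s hs' => exact hs hs'
  | zero => exact p.zero_mem
  | add _ _ _ _ h₁ h₂ => exact p.add_mem h₁ h₂
  | smul b _ _ h => exact smul_mem_of_aeval_surjective hx hp b h

theorem fg_range_of_map_smul_eq_zero (hx : Function.Surjective (aeval x : A[X] →ₐ[A] B))
    [Module.Finite B E] {F : Type*} [AddCommMonoid F] [Module A F] (f : E →ₗ[A] F)
    (hf : ∀ e, f (x • e) = 0) : (LinearMap.range f).FG := by
  obtain ⟨T, hT⟩ := Module.finite_def.mp (inferInstance : Module.Finite B E)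
  refine Submodule.fg_def.mpr ⟨f '' T, T.finite_toSet.image f, le_antisymm ?_ ?_⟩
  · exact Submodule.span_le.mpr (by rintro _ ⟨e, -, rfl⟩; exact ⟨e, rfl⟩)
  · rintro _ ⟨e, rfl⟩
    have hle := span_restrictScalars_le_of_aeval_surjective hx
      (p := (Submodule.span A (f '' T)).comap f)
      (fun e _ => by simp [Submodule.mem_comap, hf])
      (fun t ht => Submodule.subset_span ⟨t, ht, rfl⟩)
    exact hle (by simp [hT])

end PolynomialScalars

section Graded

variable {ι σB σE B E : Type*} [Semiring B] [AddCommMonoid E] [Module B E]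
  [SetLike σB B] [SetLike σE E] [AddSubmonoidClass σE E]

theorem Submodule.decompose_smul_mem_of_mem [DecidableEq ι] [AddMonoid ι]
    [AddSubmonoidClass σB B] (ℰ : ι → σE) [Decomposition ℰ] (ℬ : ι → σB) [Decomposition ℬ]
    [SetLike.GradedSMul ℬ ℰ] {p : Submodule B E} (b : B) {m : E} {i : ι}
    (hmi : m ∈ ℰ i) (hmp : m ∈ p) (j : ι) : (decompose ℰ (b • m) j : E) ∈ p := by
  classical
  rw [← sum_support_decompose ℬ b, Finset.sum_smul, decompose_sum, DFinsupp.finsetSum_apply,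
    AddSubmonoidClass.coe_finsetSum]
  refine p.sum_mem fun k _ => ?_
  have hmem : (decompose ℬ b k : B) • m ∈ ℰ (k + i) :=
    SetLike.GradedSMul.smul_mem (decompose ℬ b k).2 hmi
  rw [decompose_of_mem ℰ hmem, coe_of_apply]
  split_ifs
  · exact p.smul_mem _ hmp
  · exact p.zero_mem

theorem Submodule.isHomogeneous_span [DecidableEq ι] [AddMonoid ι] [AddSubmonoidClass σB B]
    (ℰ : ι → σE) [Decomposition ℰ] (ℬ : ι → σB) [Decomposition ℬ] [SetLike.GradedSMul ℬ ℰ]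
    {s : Set E} (hs : ∀ m ∈ s, SetLike.IsHomogeneousElem ℰ m) :
    (Submodule.span B s).IsHomogeneous ℰ := by
  classical
  intro j v hv
  induction hv using Submodule.span_induction generalizing j with
  | mem m hm =>
    obtain ⟨i, hi⟩ := hs m hm
    simpa using decompose_smul_mem_of_mem ℰ ℬ (1 : B) hi (subset_span hm) j
  | zero => simp
  | add v w _ _ hv hw => simpa using add_mem (hv j) (hw j)
  | smul b v _ hv =>
    rw [← sum_support_decompose ℰ v, Finset.smul_sum, decompose_sum, DFinsupp.finsetSum_apply,
      AddSubmonoidClass.coe_finsetSum]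
    exact sum_mem fun k _ => decompose_smul_mem_of_mem ℰ ℬ b (decompose ℰ v k).2 (hv k) j

theorem coe_decompose_smul_of_mem (ℰ : ℕ → σE) [Decomposition ℰ] {ℬ : ℕ → σB}
    [SetLike.GradedSMul ℬ ℰ] {b : B} {d : ℕ} (hb : b ∈ ℬ d) (e : E) (n : ℕ) :
    (decompose ℰ (b • e) n : E) = if d ≤ n then b • (decompose ℰ e (n - d) : E) else 0 := by
  induction e using Decomposition.inductionOn ℰ with
  | zero => simp
  | @homogeneous i m =>
    have hmem : b • (m : E) ∈ ℰ (d + i) := SetLike.GradedSMul.smul_mem hb m.2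
    rw [decompose_of_mem ℰ hmem, coe_of_apply, decompose_coe, coe_of_apply]
    split_ifs <;> first | rfl | (exfalso; omega) | simp
  | add e e' he he' =>
    rw [smul_add, decompose_add, DirectSum.add_apply, AddMemClass.coe_add, he, he']
    split_ifs <;> simp [smul_add]

end Graded

section GradedNakayama

variable {σB σE B E : Type*} [CommSemiring B] [AddCommMonoid E] [Module B E]
  [SetLike σB B] [SetLike σE E] [AddSubmonoidClass σE E]

theorem Submodule.eq_top_of_isHomogeneous_of_sup_smul_top_eq_top (ℰ : ℕ → σE)
    [Decomposition ℰ] {ℬ : ℕ → σB} [SetLike.GradedSMul ℬ ℰ] {x : B} {d : ℕ}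
    (hx : x ∈ ℬ d) (hd : 0 < d) {N : Submodule B E} (hN : N.IsHomogeneous ℰ)
    (hsup : N ⊔ x • ⊤ = ⊤) : N = ⊤ := by
  classical
  suffices hdeg : ∀ n, ∀ e ∈ ℰ n, e ∈ N by
    refine eq_top_iff.mpr fun e _ => ?_
    rw [← sum_support_decompose ℰ e]
    exact sum_mem fun n _ => hdeg n _ (decompose ℰ e n).2
  intro n
  induction n using Nat.strong_induction_on with
  | _ n ih =>
    intro e he
    have he_sup : e ∈ N ⊔ x • ⊤ := by rw [hsup]; exact Submodule.mem_top
    obtain ⟨f, hf, _, hxe, rfl⟩ := Submodule.mem_sup.mp he_sup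
    obtain ⟨e', -, rfl⟩ := (Submodule.mem_smul_pointwise_iff_exists _ _ _).mp hxe
    rw [← decompose_of_mem_same ℰ he, decompose_add, DirectSum.add_apply, AddMemClass.coe_add,
      coe_decompose_smul_of_mem ℰ hx]
    refine add_mem (hN n hf) ?_
    split_ifs with hdn
    · exact N.smul_mem x (ih (n - d) (by omega) _ (decompose ℰ e' (n - d)).2)
    · exact N.zero_mem

theorem Module.Finite.of_fg_sup_smul_top_eq_top [AddSubmonoidClass σB B] (ℰ : ℕ → σE)
    [Decomposition ℰ] {ℬ : ℕ → σB} [Decomposition ℬ] [SetLike.GradedSMul ℬ ℰ] {x : B} {d : ℕ}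
    (hx : x ∈ ℬ d) (hd : 0 < d) {N : Submodule B E} (hN : N.FG) (hsup : N ⊔ x • ⊤ = ⊤) :
    Module.Finite B E := by
  classical
  obtain ⟨T, rfl⟩ := hN
  let T' : Finset E :=
    T.biUnion fun t => (decompose ℰ t).support.image fun i => (decompose ℰ t i : E)
  have hT'_hom : ∀ m ∈ (T' : Set E), SetLike.IsHomogeneousElem ℰ m := by
    intro m hm
    simp only [T', Finset.coe_biUnion, Finset.coe_image, Set.mem_iUnion, Set.mem_image] at hm
    obtain ⟨t, -, i, -, rfl⟩ := hm
    exact ⟨i, (decompose ℰ t i).2⟩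
  have hle : Submodule.span B (T : Set E) ≤ Submodule.span B T' := by
    refine Submodule.span_le.mpr fun t ht => ?_
    rw [SetLike.mem_coe, ← sum_support_decompose ℰ t]
    refine sum_mem fun i hi => Submodule.subset_span ?_
    simp only [T', Finset.coe_biUnion, Finset.coe_image, Set.mem_iUnion, Set.mem_image]
    exact ⟨t, ht, i, hi, rfl⟩
  refine ⟨⟨T', Submodule.eq_top_of_isHomogeneous_of_sup_smul_top_eq_top ℰ hx hd
    (Submodule.isHomogeneous_span ℰ ℬ hT'_hom)
    (top_unique (hsup.symm.le.trans (sup_le_sup_right hle _)))⟩⟩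

end GradedNakayama

theorem graded_finite_generation_transfer_general
    (A : Type) [CommRing A] [IsNoetherianRing A]
    (B : Type) [CommRing B] [Algebra A B]
    (ℬ : ℕ → AddSubgroup B) [GradedRing ℬ]
    (x : B) (dx : ℕ) (hdx : 0 < dx) (hx : x ∈ ℬ dx)
    (hpoly : Function.Bijective (Polynomial.aeval x : Polynomial A →ₐ[A] B))
    (E : Type) [AddCommGroup E] [Module B E] [Module A E] [IsScalarTower A B E]
    (ℰ : ℕ → AddSubgroup E) [DirectSum.Decomposition ℰ] [SetLike.GradedSMul ℬ ℰ]
    (F : Type) [AddCommGroup F] [Module A F]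
    (ψ : E →ₗ[A] F)
    (φ : F →ₗ[A] E)
    -- exactness at the spot `F →φ E →x· E`
    (hex1 : ∀ e : E, x • e = 0 ↔ ∃ g : F, φ g = e)
    -- exactness at the spot `E →x· E →ψ F`
    (hex2 : ∀ e : E, ψ e = 0 ↔ ∃ e' : E, x • e' = e)
    -- exactness at the spot `E →ψ F →φ E`
    (hex3 : ∀ g : F, φ g = 0 ↔ ∃ e : E, ψ e = g) :
    Module.Finite A F ↔ Module.Finite B E := by
  constructor
  · intro _
    obtain ⟨T, hT, hsup⟩ := ψ.exists_finite_sup_ker_eq_top (IsNoetherian.noetherian _)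
    refine Module.Finite.of_fg_sup_smul_top_eq_top ℰ hx hdx (Submodule.fg_span hT) ?_
    refine top_unique fun e _ => ?_
    have he : e ∈ Submodule.span A T ⊔ LinearMap.ker ψ := by rw [hsup]; exact Submodule.mem_top
    obtain ⟨f, hf, _, hk, rfl⟩ := Submodule.mem_sup.mp he
    obtain ⟨e', rfl⟩ := (hex2 _).mp hk
    exact Submodule.add_mem_sup (Submodule.span_le_restrictScalars A B T hf)
      (Submodule.smul_mem_pointwise_smul _ _ _ Submodule.mem_top)
  · intro _
    have : IsNoetherianRing B := isNoetherianRing_of_surjective _ _ (aeval x).toRingHom hpoly.2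
    let K := LinearMap.ker (LinearMap.lsmul B E x)
    have hrange : LinearMap.range φ = LinearMap.range (K.subtype.restrictScalars A) := by
      ext e; simp [hex1, K]
    have hker : LinearMap.ker φ = LinearMap.range ψ := by
      ext g; simp [hex3]
    refine ⟨Submodule.fg_of_fg_map_of_fg_inf_ker φ ?_ ?_⟩
    · rw [Submodule.map_top, hrange]
      exact fg_range_of_map_smul_eq_zero hpoly.2 _ fun k => k.2
    · rw [top_inf_eq, hker]
      exact fg_range_of_map_smul_eq_zero hpoly.2 ψ fun e => (hex2 _).mpr ⟨e, rfl⟩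

theorem graded_finite_generation_transfer
    (A : Type) [CommRing A] [IsNoetherianRing A]
    (𝒜 : ℕ → AddSubgroup A) [GradedRing 𝒜]
    (B : Type) [CommRing B] [Algebra A B]
    (ℬ : ℕ → AddSubgroup B) [GradedRing ℬ]
    (halg : ∀ i, ∀ a ∈ 𝒜 i, algebraMap A B a ∈ ℬ i)
    (x : B) (dx : ℕ) (hdx : 0 < dx) (hx : x ∈ ℬ dx)
    (hpoly : Function.Bijective (Polynomial.aeval x : Polynomial A →ₐ[A] B))
    (E : Type) [AddCommGroup E] [Module B E] [Module A E] [IsScalarTower A B E]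
    (ℰ : ℕ → AddSubgroup E) [DirectSum.Decomposition ℰ] [SetLike.GradedSMul ℬ ℰ]
    (F : Type) [AddCommGroup F] [Module A F]
    (ℱ : ℕ → AddSubgroup F) [DirectSum.Decomposition ℱ] [SetLike.GradedSMul 𝒜 ℱ]
    (ψ : E →ₗ[A] F) (dψ : ℕ)
    (hψgr : ∀ i, ∀ e ∈ ℰ i, ψ e ∈ ℱ (i + dψ))
    (hψx : ∀ e : E, ψ (x • e) = 0)
    (φ : F →ₗ[A] E) (dφ : ℕ)
    (hφgr : ∀ i, ∀ g ∈ ℱ i, φ g ∈ ℰ (i + dφ))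
    (hφx : ∀ g : F, x • φ g = 0)
    -- exactness at the spot `F →φ E →x· E`
    (hex1 : ∀ e : E, x • e = 0 ↔ ∃ g : F, φ g = e)
    -- exactness at the spot `E →x· E →ψ F`
    (hex2 : ∀ e : E, ψ e = 0 ↔ ∃ e' : E, x • e' = e)
    -- exactness at the spot `E →ψ F →φ E`
    (hex3 : ∀ g : F, φ g = 0 ↔ ∃ e : E, ψ e = g) :
    Module.Finite A F ↔ Module.Finite B E :=
  graded_finite_generation_transfer_general A B ℬ x dx hdx hx hpoly E ℰ F ψ φ hex1 hex2 hex3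
end

section
/- Let Q be a commutative ring, f ∈ Q a nonzerodivisor, and R = Q/(f). Let C be a chain complex of R-modules with a lift (C̃, d̃) to finitely generated free Q-modules and Q-linear maps t̃_n : C̃_n → C̃_{n−2} satisfying d̃_{n−1}∘d̃_n = f·t̃_n. Define a sequence of free Q-modules D_n = C̃_{n−1} ⊕ C̃_{n−2} with maps d^D_n : D_n → D_{n−1} given by d^D_n(x,y) = (−d̃_{n−1}(x) − f·y, t̃_{n−1}(x) + d̃_{n−2}(y)). Then (D, d^D) is a chain complex over Q, i.e. d^D_{n−1}∘d^D_n = 0 for all n. (This complex is a lift to Q of the mapping cone of the Eisenbud operator t : C → Σ²C.) -/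
/-!
Expanding `d^D ∘ d^D` on `(x, y)`, the first component is `d̃ d̃ x − f t̃ x`, which vanishes by
the lifting identity, and the second is `d̃ t̃ x − t̃ d̃ x`. The latter vanishes because `t̃`
commutes with `d̃`: both `f • d̃ t̃ x` and `f • t̃ d̃ x` equal `d̃ d̃ d̃ x`, and `f` is a
nonzerodivisor, hence regular on the free module `C̃`.
-/

/-- With the lift indexed as `dt n : C̃ (n+1) → C̃ n` and `tt n : C̃ (n+1+1) → C̃ n`, the
cone module `D_{n+2}` is `C̃ (n+1) × C̃ n`. -/
def coneDiff (Q : Type) [CommRing Q] (f : Q)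
    (Ct : ℤ → Type) [∀ n, AddCommGroup (Ct n)] [∀ n, Module Q (Ct n)]
    (dt : ∀ n : ℤ, Ct (n + 1) →ₗ[Q] Ct n)
    (tt : ∀ n : ℤ, Ct (n + 1 + 1) →ₗ[Q] Ct n) (n : ℤ) :
    (Ct (n + 1 + 1) × Ct (n + 1)) →ₗ[Q] (Ct (n + 1) × Ct n) :=
  LinearMap.prod
    (-(dt (n + 1)).comp (LinearMap.fst Q (Ct (n + 1 + 1)) (Ct (n + 1))) -
      f • LinearMap.snd Q (Ct (n + 1 + 1)) (Ct (n + 1)))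
    ((tt n).comp (LinearMap.fst Q (Ct (n + 1 + 1)) (Ct (n + 1))) +
      (dt n).comp (LinearMap.snd Q (Ct (n + 1 + 1)) (Ct (n + 1))))

section LiftedCone

variable {Q : Type} [CommRing Q] {f : Q} {Ct : ℤ → Type} [∀ n, AddCommGroup (Ct n)]
  [∀ n, Module Q (Ct n)] {dt : ∀ n : ℤ, Ct (n + 1) →ₗ[Q] Ct n}
  {tt : ∀ n : ℤ, Ct (n + 1 + 1) →ₗ[Q] Ct n}

theorem coneDiff_apply (n : ℤ) (x : Ct (n + 1 + 1)) (y : Ct (n + 1)) :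
    coneDiff Q f Ct dt tt n (x, y) = (-dt (n + 1) x - f • y, tt n x + dt n y) :=
  rfl

theorem dt_tt_comm {n : ℤ} (hf : IsSMulRegular (Ct n) f)
    (hft : ∀ (n : ℤ) (x : Ct (n + 1 + 1)), dt n (dt (n + 1) x) = f • tt n x)
    (x : Ct (n + 1 + 1 + 1)) : dt n (tt (n + 1) x) = tt n (dt (n + 1 + 1) x) :=
  hf <| by simp only [← map_smul, ← hft]

theorem coneDiff_comp_coneDiff
    (hft : ∀ (n : ℤ) (x : Ct (n + 1 + 1)), dt n (dt (n + 1) x) = f • tt n x)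
    (hcomm : ∀ (n : ℤ) (x : Ct (n + 1 + 1 + 1)), dt n (tt (n + 1) x) = tt n (dt (n + 1 + 1) x))
    (n : ℤ) (z : Ct (n + 1 + 1 + 1) × Ct (n + 1 + 1)) :
    coneDiff Q f Ct dt tt n (coneDiff Q f Ct dt tt (n + 1) z) = 0 := by
  obtain ⟨x, y⟩ := z
  simp only [coneDiff_apply, map_add, map_sub, map_neg, map_smul, Prod.mk_eq_zero]
  constructor
  · rw [hft (n + 1) x, smul_add]
    abel
  · rw [hft n y, hcomm n x]
    abel

end LiftedCone

theorem lifted_cone_is_complex_general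
    (Q : Type) [CommRing Q] (f : Q) (hf : f ∈ nonZeroDivisors Q)
    (Ct : ℤ → Type) [∀ n, AddCommGroup (Ct n)] [∀ n, Module Q (Ct n)]
    (hfree : ∀ n, Module.Free Q (Ct n))
    (dt : ∀ n : ℤ, Ct (n + 1) →ₗ[Q] Ct n)
    (tt : ∀ n : ℤ, Ct (n + 1 + 1) →ₗ[Q] Ct n)
    (hft : ∀ (n : ℤ) (x : Ct (n + 1 + 1)), dt n (dt (n + 1) x) = f • tt n x) :
    ∀ (n : ℤ) (z : Ct (n + 1 + 1 + 1) × Ct (n + 1 + 1)),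
      coneDiff Q f Ct dt tt n (coneDiff Q f Ct dt tt (n + 1) z) = 0 :=
  coneDiff_comp_coneDiff hft fun n _ ↦
    have := hfree n
    dt_tt_comm (Module.Flat.isSMulRegular_of_nonZeroDivisors hf) hft _

/-- the lifted mapping cone is a complex: `d^D ∘ d^D = 0`. -/
theorem lifted_cone_is_complex
    (Q : Type) [CommRing Q] (f : Q) (hf : f ∈ nonZeroDivisors Q)
    (Ct : ℤ → Type) [∀ n, AddCommGroup (Ct n)] [∀ n, Module Q (Ct n)]
    (hfree : ∀ n, Module.Free Q (Ct n)) (hfin : ∀ n, Module.Finite Q (Ct n))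
    (dt : ∀ n : ℤ, Ct (n + 1) →ₗ[Q] Ct n)
    (tt : ∀ n : ℤ, Ct (n + 1 + 1) →ₗ[Q] Ct n)
    (hft : ∀ (n : ℤ) (x : Ct (n + 1 + 1)), dt n (dt (n + 1) x) = f • tt n x) :
    ∀ (n : ℤ) (z : Ct (n + 1 + 1 + 1) × Ct (n + 1 + 1)),
      coneDiff Q f Ct dt tt n (coneDiff Q f Ct dt tt (n + 1) z) = 0 :=
  lifted_cone_is_complex_general Q f hf Ct hfree dt tt hft
end

section
/- Let Q be a commutative noetherian local ring with maximal ideal m, f ∈ m a nonzerodivisor, and R = Q/(f). Let C be an exact chain complex of R-modules with a lift (C̃, d̃) to finitely generated free Q-modules and Q-linear maps t̃_n : C̃_n → C̃_{n−2} satisfying d̃_{n−1}∘d̃_n = f·t̃_n. Let D be the Q-complex with D_n = C̃_{n−1} ⊕ C̃_{n−2} and differential d^D_n(x,y) = (−d̃_{n−1}(x) − f·y, t̃_{n−1}(x) + d̃_{n−2}(y)). Then D is exact: Ker d^D_n = Im d^D_{n+1} for all n. -/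
/-!
If `(x, y)` is a cycle of `D`, then `d̃ x = -f y`, so `x` reduces to a cycle of `C`, hence to a
boundary: `x = d̃ u + f w`. Then `f y = -d̃ x = f (-t̃ u - d̃ w)`, and cancelling the
nonzerodivisor `f` on the free modules `C̃` gives `(x, y) = d^D (-u, -w)`. The same cancellation
turns `d̃ d̃ d̃ = f t̃ d̃ = f d̃ t̃` into `t̃ d̃ = d̃ t̃`, which is what makes `d^D ∘ d^D = 0`.
-/

open TensorProduct

namespace LiftedCone

section Reduction

variable {Q : Type} [CommRing Q] {f : Q} {M : Type} [AddCommGroup M] [Module Q M]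

theorem one_tmul_surjective :
    Function.Surjective fun m : M => (1 : Q ⧸ Ideal.span {f}) ⊗ₜ[Q] m := by
  intro z
  let e := quotTensorEquivQuotSMul M (Ideal.span {f})
  obtain ⟨m, hm⟩ := Submodule.mkQ_surjective _ (e z)
  refine ⟨m, show (1 : Q ⧸ Ideal.span {f}) ⊗ₜ[Q] m = z from ?_⟩
  rw [← quotTensorEquivQuotSMul_symm_mk, ← e.symm_apply_apply z, ← hm]
  rfl

theorem one_tmul_eq_zero_iff (x : M) :
    (1 : Q ⧸ Ideal.span {f}) ⊗ₜ[Q] x = 0 ↔ ∃ w : M, f • w = x := by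
  rw [← quotTensorEquivQuotSMul_symm_mk, LinearEquiv.map_eq_zero_iff,
    Submodule.Quotient.mk_eq_zero, Submodule.ideal_span_singleton_smul,
    Submodule.mem_smul_pointwise_iff_exists]
  simp

theorem exists_eq_map_add_smul_of_map_eq_smul {N P : Type} [AddCommGroup N] [Module Q N]
    [AddCommGroup P] [Module Q P] (g : M →ₗ[Q] N) (h : N →ₗ[Q] P)
    (hex : LinearMap.ker (h.baseChange (Q ⧸ Ideal.span {f})) =
      LinearMap.range (g.baseChange (Q ⧸ Ideal.span {f})))
    {x : N} {y : P} (hx : h x = f • y) : ∃ u w, x = g u + f • w := by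
  have hmem : (1 : Q ⧸ Ideal.span {f}) ⊗ₜ[Q] x ∈ LinearMap.ker (h.baseChange _) := by
    rw [LinearMap.mem_ker, LinearMap.baseChange_tmul, hx, one_tmul_eq_zero_iff]
    exact ⟨y, rfl⟩
  rw [hex] at hmem
  obtain ⟨ξ, hξ⟩ := hmem
  obtain ⟨u, rfl⟩ := one_tmul_surjective ξ
  rw [LinearMap.baseChange_tmul] at hξ
  obtain ⟨w, hw⟩ := (one_tmul_eq_zero_iff (f := f) (x - g u)).mp (by rw [tmul_sub, hξ, sub_self])
  exact ⟨u, w, by rw [hw]; abel⟩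

end Reduction

variable {Q : Type} [CommRing Q] {f : Q}
  {Ct : ℤ → Type} [∀ n, AddCommGroup (Ct n)] [∀ n, Module Q (Ct n)]
  {dt : ∀ n : ℤ, Ct (n + 1) →ₗ[Q] Ct n} {tt : ∀ n : ℤ, Ct (n + 1 + 1) →ₗ[Q] Ct n}

theorem coneDiff_apply (n : ℤ) (x : Ct (n + 1 + 1)) (y : Ct (n + 1)) :
    coneDiff Q f Ct dt tt n (x, y) = (-dt (n + 1) x - f • y, tt n x + dt n y) :=
  rfl

theorem dt_tt_comm (hreg : ∀ n, IsSMulRegular (Ct n) f)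
    (hft : ∀ (n : ℤ) (x : Ct (n + 1 + 1)), dt n (dt (n + 1) x) = f • tt n x)
    (n : ℤ) (u : Ct (n + 1 + 1 + 1)) : dt n (tt (n + 1) u) = tt n (dt (n + 1 + 1) u) :=
  hreg n <| show f • _ = f • _ by rw [← hft n, ← map_smul, ← hft (n + 1)]

theorem coneDiff_comp_coneDiff
    (hft : ∀ (n : ℤ) (x : Ct (n + 1 + 1)), dt n (dt (n + 1) x) = f • tt n x)
    (hcomm : ∀ (n : ℤ) (u : Ct (n + 1 + 1 + 1)), dt n (tt (n + 1) u) = tt n (dt (n + 1 + 1) u))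
    (n : ℤ) : coneDiff Q f Ct dt tt n ∘ₗ coneDiff Q f Ct dt tt (n + 1) = 0 := by
  refine LinearMap.ext fun ⟨u, v⟩ => ?_
  simp only [LinearMap.comp_apply, coneDiff_apply, map_sub, map_neg, map_smul, map_add,
    hft, hcomm, LinearMap.zero_apply, Prod.mk_eq_zero]
  constructor <;> module

theorem ker_coneDiff_le_range (hreg : ∀ n, IsSMulRegular (Ct n) f)
    (hft : ∀ (n : ℤ) (x : Ct (n + 1 + 1)), dt n (dt (n + 1) x) = f • tt n x)
    (hex : ∀ n : ℤ,
      LinearMap.ker ((dt n).baseChange (Q ⧸ Ideal.span {f})) =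
        LinearMap.range ((dt (n + 1)).baseChange (Q ⧸ Ideal.span {f})))
    (n : ℤ) : LinearMap.ker (coneDiff Q f Ct dt tt n) ≤
      LinearMap.range (coneDiff Q f Ct dt tt (n + 1)) := by
  rintro ⟨x, y⟩ hxy
  rw [LinearMap.mem_ker, coneDiff_apply, Prod.mk_eq_zero] at hxy
  have hdx : dt (n + 1) x = f • -y := by
    rw [smul_neg]
    linear_combination (norm := module) -hxy.1
  obtain ⟨u, w, rfl⟩ := exists_eq_map_add_smul_of_map_eq_smul _ _ (hex (n + 1)) hdx
  refine ⟨(-u, -w), ?_⟩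
  rw [coneDiff_apply, map_neg, map_neg, map_neg]
  refine Prod.ext (by simp) (hreg (n + 1) ?_)
  rw [map_add, map_smul, hft] at hdx
  linear_combination (norm := module) -hdx

end LiftedCone

open LiftedCone in
theorem lifted_cone_is_exact_general
    (Q : Type) [CommRing Q]
    (f : Q) (hf : f ∈ nonZeroDivisors Q)
    (Ct : ℤ → Type) [∀ n, AddCommGroup (Ct n)] [∀ n, Module Q (Ct n)]
    (hfree : ∀ n, Module.Free Q (Ct n))
    (dt : ∀ n : ℤ, Ct (n + 1) →ₗ[Q] Ct n)
    (tt : ∀ n : ℤ, Ct (n + 1 + 1) →ₗ[Q] Ct n)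
    (hft : ∀ (n : ℤ) (x : Ct (n + 1 + 1)), dt n (dt (n + 1) x) = f • tt n x)
    -- the reduced complex `C` over `R = Q/(f)` is exact
    (hex : ∀ n : ℤ,
      LinearMap.ker ((dt n).baseChange (Q ⧸ Ideal.span {f})) =
        LinearMap.range ((dt (n + 1)).baseChange (Q ⧸ Ideal.span {f}))) :
    ∀ n : ℤ,
      LinearMap.ker (coneDiff Q f Ct dt tt n) =
        LinearMap.range (coneDiff Q f Ct dt tt (n + 1)) := by
  have hreg : ∀ n, IsSMulRegular (Ct n) f := fun n =>
    have := hfree n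
    Module.Flat.isSMulRegular_of_nonZeroDivisors hf
  intro n
  refine le_antisymm (ker_coneDiff_le_range hreg hft hex n) ?_
  exact LinearMap.range_le_ker_iff.mpr
    (coneDiff_comp_coneDiff hft (dt_tt_comm hreg hft) n)

/-- if the reduced complex `C` is exact, then the lifted mapping cone
is an exact complex over `Q`. -/
theorem lifted_cone_is_exact
    (Q : Type) [CommRing Q] [IsNoetherianRing Q] [IsLocalRing Q]
    (f : Q) (hfm : f ∈ IsLocalRing.maximalIdeal Q) (hf : f ∈ nonZeroDivisors Q)
    (Ct : ℤ → Type) [∀ n, AddCommGroup (Ct n)] [∀ n, Module Q (Ct n)]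
    (hfree : ∀ n, Module.Free Q (Ct n)) (hfin : ∀ n, Module.Finite Q (Ct n))
    (dt : ∀ n : ℤ, Ct (n + 1) →ₗ[Q] Ct n)
    (tt : ∀ n : ℤ, Ct (n + 1 + 1) →ₗ[Q] Ct n)
    (hft : ∀ (n : ℤ) (x : Ct (n + 1 + 1)), dt n (dt (n + 1) x) = f • tt n x)
    -- the reduced complex `C` over `R = Q/(f)` is exact
    (hex : ∀ n : ℤ,
      LinearMap.ker ((dt n).baseChange (Q ⧸ Ideal.span {f})) =
        LinearMap.range ((dt (n + 1)).baseChange (Q ⧸ Ideal.span {f}))) :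
    ∀ n : ℤ,
      LinearMap.ker (coneDiff Q f Ct dt tt n) =
        LinearMap.range (coneDiff Q f Ct dt tt (n + 1)) :=
  lifted_cone_is_exact_general Q f hf Ct hfree dt tt hft hex
end
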